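/- arXiv:0704.4003 — 10 statements merged into one kernel-verified Lean document; each statement's English description precedes it below -/
import Mathlib

section
/- Let w = (C^{w≤0}, C^{w≥0}) be a weight structure on a triangulated category C. Then C^{w≤0} = (C^{w≥1})^⊥, i.e. an object X of C belongs to C^{w≤0} if and only if Hom_C(Y, X) = 0 for every Y ∈ C^{w≥1} = C^{w≥0}[-1]; and dually C^{w≥0} = ^⊥(C^{w≤-1}), i.e. X ∈ C^{w≥0} if and only if Hom_C(X, Y) = 0 for every Y ∈ C^{w≤-1} = C^{w≤0}[1]. -/
open CategoryTheory CategoryTheory.Limits CategoryTheory.Pretriangulated ZeroObject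

universe v u

variable (C : Type u) [Category.{v} C] [HasZeroObject C] [HasShift C ℤ] [Preadditive C]
  [∀ n : ℤ, (shiftFunctor C n).Additive] [Pretriangulated C]

/-- `X` is a retract of `Y` in `C`: the identity of `X` factors through `Y`. -/
def IsRetractOf (X Y : C) : Prop :=
  ∃ (i : X ⟶ Y) (r : Y ⟶ X), i ≫ r = 𝟙 X

/-- A weight structure on the triangulated category `C` (Bondarko).
`LE` is the class `C^{w≤0}`, `GE` is the class `C^{w≥0}`. -/
structure WeightStructure where
  /-- the class `C^{w≤0}` -/
  LE : Set C
  /-- the class `C^{w≥0}` -/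
  GE : Set C
  zero_mem_LE : (0 : C) ∈ LE
  zero_mem_GE : (0 : C) ∈ GE
  sum_mem_LE : ∀ X Y : C, X ∈ LE → Y ∈ LE → (X ⊞ Y) ∈ LE
  sum_mem_GE : ∀ X Y : C, X ∈ GE → Y ∈ GE → (X ⊞ Y) ∈ GE
  retract_mem_LE : ∀ X Y : C, IsRetractOf C X Y → Y ∈ LE → X ∈ LE
  retract_mem_GE : ∀ X Y : C, IsRetractOf C X Y → Y ∈ GE → X ∈ GE
  shift_mem_LE : ∀ X : C, X ∈ LE → X⟦(1 : ℤ)⟧ ∈ LE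
  shift_mem_GE : ∀ X : C, X ∈ GE → X⟦(-1 : ℤ)⟧ ∈ GE
  orthogonal : ∀ X Y : C, X ∈ GE → Y ∈ LE → ∀ f : X ⟶ Y⟦(1 : ℤ)⟧, f = 0
  exists_weight_decomposition : ∀ X : C, ∃ (A B : C) (g : X ⟶ A) (f : A ⟶ B)
    (h : B ⟶ X⟦(1 : ℤ)⟧), A ∈ LE ∧ B ∈ GE ∧ Triangle.mk g f h ∈ distTriang C

/-- `C^{w≤0} = (C^{w≥1})^⊥` and `C^{w≥0} = ^⊥(C^{w≤-1})`.
Here `Y ∈ C^{w≥1} = C^{w≥0}[-1]` iff `Y⟦1⟧ ∈ C^{w≥0}`, and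
`Y ∈ C^{w≤-1} = C^{w≤0}[1]` iff `Y⟦-1⟧ ∈ C^{w≤0}`. -/
theorem weightStructure_LE_eq_perp_and_GE_eq_perp (w : WeightStructure C) :
    (∀ X : C, X ∈ w.LE ↔ ∀ Y : C, Y⟦(1 : ℤ)⟧ ∈ w.GE → ∀ f : Y ⟶ X, f = 0) ∧
    (∀ X : C, X ∈ w.GE ↔ ∀ Y : C, Y⟦(-1 : ℤ)⟧ ∈ w.LE → ∀ f : X ⟶ Y, f = 0) := by
  have iso_retract : ∀ (X Y : C), (X ≅ Y) → IsRetractOf C X Y :=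
    fun X Y e => ⟨e.hom, e.inv, e.hom_inv_id⟩
  constructor
  · intro X
    constructor
    · intro hX Y hY f
      have h1 : f⟦(1 : ℤ)⟧' = 0 := w.orthogonal _ X hY hX (f⟦(1 : ℤ)⟧')
      exact (shiftFunctor C (1 : ℤ)).map_injective (by simpa using h1)
    · intro hX
      obtain ⟨A, B, g, f, h, hA, hB, hT⟩ := w.exists_weight_decomposition X
      have hT' := inv_rot_of_distTriang _ hT
      set T' := (Triangle.mk g f h).invRotate with hT'def
      have hBshift : (B⟦(-1 : ℤ)⟧)⟦(1 : ℤ)⟧ ∈ w.GE :=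
        w.retract_mem_GE _ B
          (iso_retract _ _ ((shiftEquiv C (1 : ℤ)).counitIso.app B)) hB
      have hmor₁ : T'.mor₁ = 0 := hX (B⟦(-1 : ℤ)⟧) hBshift T'.mor₁
      obtain ⟨r, hr⟩ := Triangle.yoneda_exact₂ T' hT' (𝟙 X)
        (by rw [hmor₁]; exact zero_comp)
      have : IsRetractOf C X A := ⟨g, r, hr.symm⟩
      exact w.retract_mem_LE X A this hA
  · intro X
    constructor
    · intro hX Y hY f
      have h1 : f ≫ ((shiftEquiv C (1 : ℤ)).counitIso.app Y).inv = 0 :=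
        w.orthogonal X (Y⟦(-1 : ℤ)⟧) hX hY _
      have := h1 =≫ ((shiftEquiv C (1 : ℤ)).counitIso.app Y).hom
      simpa using this
    · intro hX
      obtain ⟨A, B, g, f, h, hA, hB, hT⟩ := w.exists_weight_decomposition (X⟦(-1 : ℤ)⟧)
      have hT' := rot_of_distTriang _ hT
      set T' := (Triangle.mk g f h).rotate with hT'def
      have hAshift : (A⟦(1 : ℤ)⟧)⟦(-1 : ℤ)⟧ ∈ w.LE :=
        w.retract_mem_LE _ A
          (iso_retract _ _ ((shiftEquiv C (1 : ℤ)).unitIso.app A).symm) hA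
      set e := (shiftEquiv C (1 : ℤ)).counitIso.app X with he
      have hmor : (e.inv ≫ T'.mor₃ : X ⟶ A⟦(1 : ℤ)⟧) = 0 :=
        hX (A⟦(1 : ℤ)⟧) hAshift _
      obtain ⟨s, hs⟩ := Triangle.coyoneda_exact₃ T' hT' e.inv hmor
      have : IsRetractOf C X B := ⟨s, T'.mor₂ ≫ e.hom, by
        have := Category.assoc s T'.mor₂ e.hom; rw [← hs] at this; exact this.symm.trans e.inv_hom_id⟩
      exact w.retract_mem_GE X B this hB
end

section
/- Let w = (C^{w≤0}, C^{w≥0}) be a weight structure on a triangulated category C. Then each of the classes C^{w≥0}, C^{w≤0} and C^{w=0} = C^{w≤0} ∩ C^{w≥0} is extension-stable: for any distinguished triangle A → B → C in C, if A and C both belong to the class then so does B. -/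
open CategoryTheory CategoryTheory.Limits CategoryTheory.Pretriangulated ZeroObject

universe v u

variable (C : Type u) [Category.{v} C] [HasZeroObject C] [HasShift C ℤ] [Preadditive C]
  [∀ n : ℤ, (shiftFunctor C n).Additive] [Pretriangulated C]

/-- A class of objects is extension-stable if for every distinguished triangle
`A → B → C`, if `A` and `C` belong to the class then so does `B`. -/
def ExtensionStable (S : Set C) : Prop :=
  ∀ T : Triangle C, (T ∈ distTriang C) → T.obj₁ ∈ S → T.obj₃ ∈ S → T.obj₂ ∈ S

set_option linter.unusedSectionVars false

section Aux

variable {C} [Category.{v} C] [HasZeroObject C] [HasShift C ℤ] [Preadditive C]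
  [∀ n : ℤ, (shiftFunctor C n).Additive] [Pretriangulated C]

lemma WeightStructure.mem_LE_of_orth (w : WeightStructure C) (Y : C)
    (hY : ∀ X : C, X ∈ w.GE → ∀ f : X ⟶ Y⟦(1 : ℤ)⟧, f = 0) : Y ∈ w.LE := by
  obtain ⟨A, B, g, f, h, hA, hB, hT⟩ := w.exists_weight_decomposition Y
  have hzero : h = 0 := hY B hB h
  obtain ⟨r, hr⟩ := Triangle.yoneda_exact₂ _ (inv_rot_of_distTriang _ hT) (𝟙 Y)
    (by show (-(shiftFunctor C (-1 : ℤ)).map h ≫ (shiftEquiv C (1 : ℤ)).unitIso.inv.app Y) ≫ 𝟙 Y = 0; rw [hzero, Functor.map_zero]; simp)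
  exact w.retract_mem_LE Y A ⟨g, r, hr.symm⟩ hA

lemma WeightStructure.mem_GE_of_orth (w : WeightStructure C) (X : C)
    (hX : ∀ Y : C, Y ∈ w.LE → ∀ f : X ⟶ Y⟦(1 : ℤ)⟧, f = 0) : X ∈ w.GE := by
  obtain ⟨A, B, g, f, h, hA, hB, hT⟩ := w.exists_weight_decomposition (X⟦(-1 : ℤ)⟧)
  have e : (X⟦(-1 : ℤ)⟧)⟦(1 : ℤ)⟧ ≅ X := (shiftEquiv C (1 : ℤ)).counitIso.app X
  have hg : g = 0 := by
    apply (shiftFunctor C (1 : ℤ)).map_injective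
    have h0 : e.inv ≫ (shiftFunctor C (1 : ℤ)).map g = 0 :=
      hX A hA (e.inv ≫ (shiftFunctor C (1 : ℤ)).map g)
    have : (shiftFunctor C (1 : ℤ)).map g
        = e.hom ≫ (e.inv ≫ (shiftFunctor C (1 : ℤ)).map g) := by simp
    rw [this, h0]; simp
  obtain ⟨s, hs⟩ := Triangle.coyoneda_exact₃ _ (rot_of_distTriang _ hT)
    (𝟙 ((X⟦(-1 : ℤ)⟧)⟦(1 : ℤ)⟧))
    (by show 𝟙 _ ≫ (-(shiftFunctor C (1 : ℤ)).map g) = 0; rw [hg, Functor.map_zero]; simp)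
  have h1 : (X⟦(-1 : ℤ)⟧)⟦(1 : ℤ)⟧ ∈ w.GE :=
    w.retract_mem_GE _ B ⟨s, h, hs.symm⟩ hB
  exact w.retract_mem_GE X _ ⟨e.inv, e.hom, by simp⟩ h1

end Aux

/-- `C^{w≤0}`, `C^{w≥0}` and the heart `C^{w=0}` are extension-stable. -/
theorem weightStructure_extensionStable (w : WeightStructure C) :
    ExtensionStable C w.LE ∧ ExtensionStable C w.GE ∧
      ExtensionStable C (w.LE ∩ w.GE) := by
  have hGE : ExtensionStable C w.GE := by
    intro T hT h1 h3
    apply w.mem_GE_of_orth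
    intro Y hY f
    obtain ⟨u, hu⟩ := Triangle.yoneda_exact₂ _ hT f
      (w.orthogonal _ Y h1 hY (T.mor₁ ≫ f))
    rw [hu, w.orthogonal _ Y h3 hY u, Limits.comp_zero]
  have hLE : ExtensionStable C w.LE := by
    intro T hT h1 h3
    apply w.mem_LE_of_orth
    intro X hX f
    -- rotate twice: triangle (T.obj₃, T.obj₁⟦1⟧, T.obj₂⟦1⟧)
    have hT2 := rot_of_distTriang _ (rot_of_distTriang _ hT)
    obtain ⟨u, hu⟩ := Triangle.coyoneda_exact₃ _ hT2 f
      (by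
        show f ≫ (-(shiftFunctor C (1 : ℤ)).map T.mor₂) = 0
        rw [Preadditive.comp_neg]
        have : f ≫ (shiftFunctor C (1 : ℤ)).map T.mor₂ = 0 :=
          w.orthogonal X _ hX h3 _
        rw [this, neg_zero])
    have hu0 : u = 0 := w.orthogonal X _ hX h1 u
    rw [hu, hu0, Limits.zero_comp]
    rfl
  exact ⟨hLE, hGE, fun T hT h1 h3 =>
    ⟨hLE T hT h1.1 h3.1, hGE T hT h1.2 h3.2⟩⟩
end

section
/- Let w = (C^{w≤0}, C^{w≥0}) be a weight structure on a triangulated category C. Then: (a) if X ∈ C^{w≥0}, then for any weight decomposition B[-1] → X → A → B of X one has A ∈ C^{w=0}; (b) if A → B → C → A[1] is a distinguished triangle with A, C ∈ C^{w=0}, then B ≅ A ⊕ C; (c) if X ∈ C^{w=0} and B[-1] → X[-1] → A → B is a weight decomposition of X[-1], then B ∈ C^{w=0} and B ≅ A ⊕ X. -/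
open CategoryTheory CategoryTheory.Limits CategoryTheory.Pretriangulated ZeroObject

universe v u

variable (C : Type u) [Category.{v} C] [HasZeroObject C] [HasShift C ℤ] [Preadditive C]
  [∀ n : ℤ, (shiftFunctor C n).Additive] [Pretriangulated C]

section Aux

variable {C}

set_option linter.unusedSectionVars false in
lemma isRetractOf_of_iso {X Y : C} (e : X ≅ Y) : IsRetractOf C X Y :=
  ⟨e.hom, e.inv, e.hom_inv_id⟩

/-- A distinguished triangle with vanishing third map splits. -/
lemma split_of_mor₃_eq_zero (T : Triangle C) (hT : T ∈ distTriang C)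
    (h3 : T.mor₃ = 0) : Nonempty (T.obj₂ ≅ T.obj₁ ⊞ T.obj₃) := by
  obtain ⟨s, hs⟩ := Triangle.coyoneda_exact₃ T hT (𝟙 T.obj₃) (by simp [h3])
  let φ : binaryBiproductTriangle T.obj₁ T.obj₃ ⟶ T :=
    { hom₁ := 𝟙 T.obj₁
      hom₂ := biprod.desc T.mor₁ s
      hom₃ := 𝟙 T.obj₃
      comm₁ := by
        show (biprod.inl : T.obj₁ ⟶ T.obj₁ ⊞ T.obj₃) ≫ biprod.desc T.mor₁ s = 𝟙 T.obj₁ ≫ T.mor₁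
        simp
      comm₂ := by
        show (biprod.snd : T.obj₁ ⊞ T.obj₃ ⟶ T.obj₃) ≫ 𝟙 T.obj₃ = biprod.desc T.mor₁ s ≫ T.mor₂
        ext
        · simp [comp_distTriang_mor_zero₁₂ T hT]
        · simp [← hs]
      comm₃ := by
        show (0 : T.obj₃ ⟶ T.obj₁⟦(1 : ℤ)⟧) ≫ (𝟙 T.obj₁)⟦(1 : ℤ)⟧' = 𝟙 T.obj₃ ≫ T.mor₃
        simp [h3] }
  have : IsIso φ.hom₂ := isIso₂_of_isIso₁₃ φ
    (binaryBiproductTriangle_distinguished T.obj₁ T.obj₃) hT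
    (by dsimp [φ]; exact IsIso.id _) (by dsimp [φ]; exact IsIso.id _)
  exact ⟨(asIso φ.hom₂).symm⟩

variable (w : WeightStructure C)

lemma mem_LE_of_iso {X Y : C} (e : X ≅ Y) (hY : Y ∈ w.LE) : X ∈ w.LE :=
  w.retract_mem_LE X Y (isRetractOf_of_iso e) hY

lemma mem_GE_of_iso {X Y : C} (e : X ≅ Y) (hY : Y ∈ w.GE) : X ∈ w.GE :=
  w.retract_mem_GE X Y (isRetractOf_of_iso e) hY

lemma mem_GE_of_retract_biprod_right {X A B : C} (e : B ≅ A ⊞ X) (hB : B ∈ w.GE) :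
    X ∈ w.GE :=
  w.retract_mem_GE X B ⟨biprod.inr ≫ e.inv, e.hom ≫ biprod.snd, by simp⟩ hB

/-- The shift compatibility isomorphism `X⟦-1⟧⟦1⟧ ≅ X`. -/
noncomputable def shiftNegOneOne (X : C) : (X⟦(-1 : ℤ)⟧)⟦(1 : ℤ)⟧ ≅ X :=
  (shiftFunctorCompIsoId C (-1 : ℤ) (1 : ℤ) (by norm_num)).app X

/-- An object orthogonal to `LE⟦1⟧` is in `GE`. -/
lemma mem_GE_of_orthogonal (T : C)
    (hT : ∀ Y : C, Y ∈ w.LE → ∀ f : T ⟶ Y⟦(1 : ℤ)⟧, f = 0) : T ∈ w.GE := by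
  obtain ⟨A, B, g, f, h, hA, hB, hdist⟩ := w.exists_weight_decomposition (T⟦(-1 : ℤ)⟧)
  have hrot := rot_of_distTriang _ hdist
  have hzero : (Triangle.mk g f h).rotate.mor₃ = 0 := by
    dsimp [Triangle.rotate]
    change -g⟦(1 : ℤ)⟧' = 0
    have := hT A hA ((shiftNegOneOne T).inv ≫ (-g⟦(1 : ℤ)⟧'))
    have h2 : -g⟦(1 : ℤ)⟧' = (shiftNegOneOne T).hom ≫
        ((shiftNegOneOne T).inv ≫ (-g⟦(1 : ℤ)⟧')) := by simp
    rw [h2, this, comp_zero]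
  obtain ⟨e⟩ := split_of_mor₃_eq_zero _ hrot hzero
  have hX' : (T⟦(-1 : ℤ)⟧)⟦(1 : ℤ)⟧ ∈ w.GE :=
    mem_GE_of_retract_biprod_right w e hB
  exact mem_GE_of_iso w (shiftNegOneOne T).symm hX'

end Aux

/-- (a) in any weight decomposition `X → A → B → X⟦1⟧` of an object
`X ∈ C^{w≥0}`, the component `A` lies in the heart `C^{w=0}`;
(b) a distinguished triangle `A → B → D → A[1]` with `A, D ∈ C^{w=0}` splits:
`B ≅ A ⊞ D`; (c) for `X ∈ C^{w=0}` and a weight decomposition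
`X[-1] → A → B → X[-1][1]` of `X[-1]`, one has `B ∈ C^{w=0}` and `B ≅ A ⊞ X`. -/
theorem weightStructure_heart_properties (w : WeightStructure C) :
    (∀ (X A B : C) (g : X ⟶ A) (f : A ⟶ B) (h : B ⟶ X⟦(1 : ℤ)⟧),
      X ∈ w.GE → A ∈ w.LE → B ∈ w.GE → (Triangle.mk g f h ∈ distTriang C) →
      A ∈ w.LE ∩ w.GE) ∧
    (∀ (A B D : C) (f : A ⟶ B) (g : B ⟶ D) (h : D ⟶ A⟦(1 : ℤ)⟧),
      A ∈ w.LE ∩ w.GE → D ∈ w.LE ∩ w.GE → (Triangle.mk f g h ∈ distTriang C) →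
      Nonempty (B ≅ A ⊞ D)) ∧
    (∀ (X A B : C) (g : X⟦(-1 : ℤ)⟧ ⟶ A) (f : A ⟶ B)
      (h : B ⟶ (X⟦(-1 : ℤ)⟧)⟦(1 : ℤ)⟧),
      X ∈ w.LE ∩ w.GE → A ∈ w.LE → B ∈ w.GE →
      (Triangle.mk g f h ∈ distTriang C) →
      B ∈ w.LE ∩ w.GE ∧ Nonempty (B ≅ A ⊞ X)) := by
  have partA : ∀ (X A B : C) (g : X ⟶ A) (f : A ⟶ B) (h : B ⟶ X⟦(1 : ℤ)⟧),
      X ∈ w.GE → A ∈ w.LE → B ∈ w.GE → (Triangle.mk g f h ∈ distTriang C) →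
      A ∈ w.LE ∩ w.GE := by
    intro X A B g f h hX hA hB hdist
    refine ⟨hA, mem_GE_of_orthogonal w A ?_⟩
    intro Y hY φ
    obtain ⟨ψ, hψ⟩ := Triangle.yoneda_exact₂ _ hdist φ (w.orthogonal X Y hX hY _)
    rw [hψ, w.orthogonal B Y hB hY ψ]; exact comp_zero
  refine ⟨partA, ?_, ?_⟩
  · intro A B D f g h hA hD hdist
    have h0 : (Triangle.mk f g h).mor₃ = 0 := w.orthogonal D A hD.2 hA.1 h
    exact split_of_mor₃_eq_zero _ hdist h0
  · intro X A B g f h hX hA hB hdist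
    have hX' : (X⟦(-1 : ℤ)⟧)⟦(1 : ℤ)⟧ ∈ w.GE :=
      mem_GE_of_iso w (shiftNegOneOne X) hX.2
    have hrot := rot_of_distTriang _ hdist
    have hzero : (Triangle.mk g f h).rotate.mor₃ = 0 := by
      dsimp [Triangle.rotate]
      exact w.orthogonal _ A hX' hA _
    obtain ⟨e⟩ := split_of_mor₃_eq_zero _ hrot hzero
    have e' : B ≅ A ⊞ X := e ≪≫ biprod.mapIso (Iso.refl A) (shiftNegOneOne X)
    refine ⟨⟨?_, hB⟩, ⟨e'⟩⟩
    exact mem_LE_of_iso w e' (w.sum_mem_LE A X hA hX.1)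
end

section
/- Let C be a class of objects of a triangulated category Cu which is closed under finite direct sums, contains all retracts in Cu of its objects, and satisfies C ⊆ C[1]. Let C₁ = (C^⊥)[-1], i.e. C₁ = {X : Hom_Cu(Y, X[1]) = 0 for all Y ∈ C}. Suppose that for every object X of Cu there exist A ∈ C₁, B ∈ C and a distinguished triangle B[-1] → X → A → B. Then the pair (C₁, C) is a weight structure on Cu (with C₁ as the non-positive part C^{w≤0} and C as the non-negative part C^{w≥0}). -/
open CategoryTheory CategoryTheory.Limits CategoryTheory.Pretriangulated ZeroObject

universe v u

variable (C : Type u) [Category.{v} C] [HasZeroObject C] [HasShift C ℤ] [Preadditive C]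
  [∀ n : ℤ, (shiftFunctor C n).Additive] [Pretriangulated C]

/-- Lemma 1.3.2(2) of Bondarko: if `S` is an additive,
Karoubi-closed class with `S ⊆ S[1]`, `S₁ = (S^⊥)[-1]` (i.e. `X ∈ S₁` iff
`Hom(Y, X[1]) = 0` for all `Y ∈ S`), and every object admits a decomposition
`B[-1] → X → A → B` with `A ∈ S₁`, `B ∈ S`, then `(S₁, S)` is a weight
structure on `C`. -/
theorem weightStructure_of_adapted_class (S : Set C)
    (hzero : (0 : C) ∈ S)
    (hsum : ∀ X Y : C, X ∈ S → Y ∈ S → (X ⊞ Y) ∈ S)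
    (hretract : ∀ X Y : C, IsRetractOf C X Y → Y ∈ S → X ∈ S)
    (hshift : ∀ X : C, X ∈ S → X⟦(-1 : ℤ)⟧ ∈ S)
    (hdecomp : ∀ X : C, ∃ (A B : C) (g : X ⟶ A) (f : A ⟶ B) (h : B ⟶ X⟦(1 : ℤ)⟧),
      (∀ Y : C, Y ∈ S → ∀ φ : Y ⟶ A⟦(1 : ℤ)⟧, φ = 0) ∧ B ∈ S ∧
      Triangle.mk g f h ∈ distTriang C) :
    ∃ w : WeightStructure C,
      w.LE = {X : C | ∀ Y : C, Y ∈ S → ∀ φ : Y ⟶ X⟦(1 : ℤ)⟧, φ = 0} ∧ w.GE = S := by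
  refine ⟨{
    LE := {X : C | ∀ Y : C, Y ∈ S → ∀ φ : Y ⟶ X⟦(1 : ℤ)⟧, φ = 0}
    GE := S
    zero_mem_LE := by
      intro Y _ φ
      exact ((shiftFunctor C (1 : ℤ)).map_isZero (isZero_zero C)).eq_of_tgt φ 0
    zero_mem_GE := hzero
    sum_mem_LE := by
      intro X Y hX hY Z hZ φ
      have htot : (shiftFunctor C (1 : ℤ)).map (biprod.fst : X ⊞ Y ⟶ X) ≫
          (shiftFunctor C (1 : ℤ)).map biprod.inl +
          (shiftFunctor C (1 : ℤ)).map (biprod.snd : X ⊞ Y ⟶ Y) ≫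
          (shiftFunctor C (1 : ℤ)).map biprod.inr = 𝟙 _ := by
        rw [← Functor.map_comp, ← Functor.map_comp, ← Functor.map_add, biprod.total,
          CategoryTheory.Functor.map_id]
      calc φ = φ ≫ 𝟙 _ := by simp
        _ = φ ≫ ((shiftFunctor C (1 : ℤ)).map (biprod.fst : X ⊞ Y ⟶ X) ≫
              (shiftFunctor C (1 : ℤ)).map biprod.inl +
              (shiftFunctor C (1 : ℤ)).map (biprod.snd : X ⊞ Y ⟶ Y) ≫
              (shiftFunctor C (1 : ℤ)).map biprod.inr) := by rw [htot]
        _ = 0 := by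
            rw [Preadditive.comp_add, ← Category.assoc, ← Category.assoc,
              hX Z hZ (φ ≫ (shiftFunctor C (1 : ℤ)).map biprod.fst),
              hY Z hZ (φ ≫ (shiftFunctor C (1 : ℤ)).map biprod.snd)]
            simp
    sum_mem_GE := hsum
    retract_mem_LE := by
      intro X Y ⟨i, r, hir⟩ hY Z hZ φ
      have : φ ≫ (shiftFunctor C (1 : ℤ)).map (i ≫ r) = φ := by
        rw [hir]; simp
      rw [← this, Functor.map_comp, ← Category.assoc]
      rw [hY Z hZ (φ ≫ (shiftFunctor C (1 : ℤ)).map i), zero_comp]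
    retract_mem_GE := hretract
    shift_mem_LE := by
      intro X hX Y hY φ
      have h : (shiftFunctor C (-1 : ℤ)).map φ ≫
          (shiftFunctorCompIsoId C (1 : ℤ) (-1 : ℤ) (by norm_num)).hom.app (X⟦(1 : ℤ)⟧) = 0 :=
        hX (Y⟦(-1 : ℤ)⟧) (hshift Y hY) _
      have h2 : (shiftFunctor C (-1 : ℤ)).map φ = 0 := by
        have := h =≫ (shiftFunctorCompIsoId C (1 : ℤ) (-1 : ℤ) (by norm_num)).inv.app (X⟦(1 : ℤ)⟧)
        simpa using this
      exact (shiftFunctor C (-1 : ℤ)).map_injective (by rw [h2]; simp)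
    shift_mem_GE := hshift
    orthogonal := fun X Y hX hY f => hY X hX f
    exists_weight_decomposition := by
      intro X
      obtain ⟨A, B, g, f, h, hA, hB, hT⟩ := hdecomp X
      exact ⟨A, B, g, f, h, hA, hB, hT⟩ }, rfl, rfl⟩
end

section
/- Suppose v and w are two weight structures on the same triangulated category C such that C^{v≤0} ⊆ C^{w≤0} and C^{v≥0} ⊆ C^{w≥0}. Then v = w, i.e. both inclusions are equalities. -/
open CategoryTheory CategoryTheory.Limits CategoryTheory.Pretriangulated ZeroObject

universe v u

variable (C : Type u) [Category.{v} C] [HasZeroObject C] [HasShift C ℤ] [Preadditive C]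
  [∀ n : ℤ, (shiftFunctor C n).Additive] [Pretriangulated C]

/-- if two weight structures `v, w` on `C` satisfy
`C^{v≤0} ⊆ C^{w≤0}` and `C^{v≥0} ⊆ C^{w≥0}`, then they coincide. -/
theorem weightStructure_comparison (v w : WeightStructure C)
    (hLE : v.LE ⊆ w.LE) (hGE : v.GE ⊆ w.GE) :
    v.LE = w.LE ∧ v.GE = w.GE := by
  constructor
  · refine Set.Subset.antisymm hLE (fun X hX => ?_)
    obtain ⟨A, B, g, f, h, hA, hB, hT⟩ := v.exists_weight_decomposition X
    have hzero : h = 0 := w.orthogonal B X (hGE hB) hX h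
    -- the inverse rotation of the triangle has zero first morphism
    have hT' := inv_rot_of_distTriang _ hT
    have hmor : (Triangle.mk g f h).invRotate.mor₁ = 0 := by
      simp [Triangle.invRotate, hzero]
      erw [Functor.map_zero]; simp only [neg_zero, zero_comp]; rfl
    obtain ⟨r, hr⟩ := Triangle.yoneda_exact₂ _ hT' (𝟙 X) (by rw [hmor]; exact zero_comp)
    exact v.retract_mem_LE X A ⟨g, r, hr.symm⟩ hA
  · refine Set.Subset.antisymm hGE (fun X hX => ?_)
    obtain ⟨A, B, g, f, h, hA, hB, hT⟩ := v.exists_weight_decomposition (X⟦(-1 : ℤ)⟧)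
    -- `X⟦-1⟧⟦1⟧` is a retract of `X` (in fact isomorphic), hence in `w.GE`
    set e : (X⟦(-1 : ℤ)⟧)⟦(1 : ℤ)⟧ ≅ X := (shiftEquiv C (1 : ℤ)).counitIso.app X
    have hX' : (X⟦(-1 : ℤ)⟧)⟦(1 : ℤ)⟧ ∈ w.GE :=
      w.retract_mem_GE _ X ⟨e.hom, e.inv, e.hom_inv_id⟩ hX
    have hg1 : g⟦(1 : ℤ)⟧' = 0 := w.orthogonal _ A hX' (hLE hA) _
    obtain ⟨s, hs⟩ := Triangle.coyoneda_exact₁ _ hT (𝟙 ((X⟦(-1 : ℤ)⟧)⟦(1 : ℤ)⟧))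
      (by exact (Category.id_comp _).trans hg1)
    have hs' : s ≫ h = 𝟙 _ := hs.symm
    exact v.retract_mem_GE X B ⟨e.inv ≫ s, h ≫ e.hom, by
      erw [Category.assoc, ← Category.assoc s, hs', Category.id_comp, e.inv_hom_id]⟩ hB
end

section
/- Let w be a weight structure on a triangulated category C, let A be an abelian category, let H : C → A be an additive covariant functor, and let i ∈ ℤ. For X an object of C, choose a weight decomposition of X[i-1], giving a distinguished triangle w_{≥i}X → X → w_{≤i-1}X with w_{≥i}X ∈ C^{w≥i} and w_{≤i-1}X ∈ C^{w≤i-1}, and set W_i(H)(X) = Im(H(w_{≥i}X) → H(X)), the image of H applied to the first map. Then: (1) the subobject W_i(H)(X) of H(X) does not depend on the choice of the weight decomposition; (2) for every morphism f : X → Y in C (and any choices of weight decompositions for X and Y), H(f) maps W_i(H)(X) into W_i(H)(Y). -/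
open CategoryTheory CategoryTheory.Limits CategoryTheory.Pretriangulated ZeroObject

universe v u

variable (C : Type u) [Category.{v} C] [HasZeroObject C] [HasShift C ℤ] [Preadditive C]
  [∀ n : ℤ, (shiftFunctor C n).Additive] [Pretriangulated C]

lemma hom_zero_of_weights (w : WeightStructure C) (i : ℤ) {Z P : C}
    (hZ : Z⟦i⟧ ∈ w.GE) (hP : P⟦i - 1⟧ ∈ w.LE) (φ : Z ⟶ P) : φ = 0 := by
  have e : (shiftFunctor C i).obj P ≅ (shiftFunctor C (1 : ℤ)).obj ((shiftFunctor C (i-1)).obj P) :=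
    (shiftFunctorAdd' C (i-1) 1 i (by ring)).app P
  have h0 := w.orthogonal _ _ hZ hP ((shiftFunctor C i).map φ ≫ e.hom)
  have h1 : (shiftFunctor C i).map φ = 0 := by
    have : (shiftFunctor C i).map φ = ((shiftFunctor C i).map φ ≫ e.hom) ≫ e.inv := by simp
    rw [this, h0, zero_comp]
  apply (shiftFunctor C i).map_injective
  rw [h1, Functor.map_zero]

/-- the weight filtration `W_i(H)(X) = Im(H(w_{≥i}X) → H(X))` of a
covariant additive functor `H : C ⥤ A` (`A` abelian) is independent of the
choice of the weight decomposition of `X[i-1]` and is functorial in `X`.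
A weight decomposition of `X[i-1]` is encoded (after shifting) as a
distinguished triangle `Z → X → P → Z⟦1⟧` with `Z ∈ C^{w≥i}` (`Z⟦i⟧ ∈ C^{w≥0}`)
and `P ∈ C^{w≤i-1}` (`P⟦i-1⟧ ∈ C^{w≤0}`), so that `Z = w_{≥i}X`. -/
theorem weightStructure_weight_filtration {A : Type*} [Category A] [Abelian A]
    (w : WeightStructure C) (H : C ⥤ A) [H.Additive] (i : ℤ) :
    (∀ (X Z P Z' P' : C) (g : Z ⟶ X) (p : X ⟶ P) (d : P ⟶ Z⟦(1 : ℤ)⟧)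
      (g' : Z' ⟶ X) (p' : X ⟶ P') (d' : P' ⟶ Z'⟦(1 : ℤ)⟧),
      Z⟦i⟧ ∈ w.GE → P⟦i - 1⟧ ∈ w.LE → Z'⟦i⟧ ∈ w.GE → P'⟦i - 1⟧ ∈ w.LE →
      (Triangle.mk g p d ∈ distTriang C) → (Triangle.mk g' p' d' ∈ distTriang C) →
      imageSubobject (H.map g) = imageSubobject (H.map g')) ∧
    (∀ (X Y : C) (f : X ⟶ Y) (ZX PX ZY PY : C)
      (gX : ZX ⟶ X) (pX : X ⟶ PX) (dX : PX ⟶ ZX⟦(1 : ℤ)⟧)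
      (gY : ZY ⟶ Y) (pY : Y ⟶ PY) (dY : PY ⟶ ZY⟦(1 : ℤ)⟧),
      ZX⟦i⟧ ∈ w.GE → PX⟦i - 1⟧ ∈ w.LE → ZY⟦i⟧ ∈ w.GE → PY⟦i - 1⟧ ∈ w.LE →
      (Triangle.mk gX pX dX ∈ distTriang C) → (Triangle.mk gY pY dY ∈ distTriang C) →
      imageSubobject (H.map gX ≫ H.map f) ≤ imageSubobject (H.map gY)) := by
  have key : ∀ (X Y : C) (f : X ⟶ Y) (ZX PX ZY PY : C)
      (gX : ZX ⟶ X) (pX : X ⟶ PX) (dX : PX ⟶ ZX⟦(1 : ℤ)⟧)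
      (gY : ZY ⟶ Y) (pY : Y ⟶ PY) (dY : PY ⟶ ZY⟦(1 : ℤ)⟧),
      ZX⟦i⟧ ∈ w.GE → PX⟦i - 1⟧ ∈ w.LE → ZY⟦i⟧ ∈ w.GE → PY⟦i - 1⟧ ∈ w.LE →
      (Triangle.mk gX pX dX ∈ distTriang C) → (Triangle.mk gY pY dY ∈ distTriang C) →
      imageSubobject (H.map gX ≫ H.map f) ≤ imageSubobject (H.map gY) := by
    intro X Y f ZX PX ZY PY gX pX dX gY pY dY hZX hPX hZY hPY hTX hTY
    have hz : (gX ≫ f) ≫ pY = 0 := by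
      rw [Category.assoc]
      exact hom_zero_of_weights C w i hZX hPY _
    obtain ⟨h, hh⟩ := Triangle.coyoneda_exact₂ _ hTY (gX ≫ f) hz
    have : H.map gX ≫ H.map f = H.map h ≫ H.map gY := by
      exact (H.map_comp gX f).symm.trans ((congrArg H.map hh).trans (H.map_comp h _))
    rw [this]
    exact imageSubobject_comp_le (H.map h) (H.map gY)
  refine ⟨?_, key⟩
  intro X Z P Z' P' g p d g' p' d' hZ hP hZ' hP' hT hT'
  apply le_antisymm
  · have := key X X (𝟙 X) Z P Z' P' g p d g' p' d' hZ hP hZ' hP' hT hT'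
    simpa using this
  · have := key X X (𝟙 X) Z' P' Z P g' p' d' g p d hZ' hP' hZ hP hT' hT
    simpa using this
end

section
/- Let H be a full additive subcategory of a triangulated category C which is negative (Hom_C(X, Y[i]) = 0 for all objects X, Y of H and all i > 0) and which generates C as a triangulated category (C is the smallest strictly full triangulated subcategory containing all objects of H). Then: (1) there exists a weight structure w on C such that every object of H lies in C^{w=0}, and this weight structure is unique with that property; moreover w is bounded (∪_l C^{w≤l} = ∪_l C^{w≥l} = Obj C); (2) the heart C^{w=0} equals the Karoubi-closure of Obj H in C, i.e. the class of all retracts in C of objects of H. -/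
set_option linter.unusedSectionVars false
set_option maxHeartbeats 1000000


open CategoryTheory CategoryTheory.Limits CategoryTheory.Pretriangulated ZeroObject

universe v u

variable (C : Type u) [Category.{v} C] [HasZeroObject C] [HasShift C ℤ] [Preadditive C]
  [∀ n : ℤ, (shiftFunctor C n).Additive] [Pretriangulated C]

/-- The closure properties of (the object class of) a strictly full triangulated
subcategory of `C`: contains `0`, closed under isomorphisms, shifts, and cones. -/
def IsTriangulatedClass (S : Set C) : Prop :=
  ((0 : C) ∈ S) ∧
  (∀ X Y : C, X ∈ S → Nonempty (X ≅ Y) → Y ∈ S) ∧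
  (∀ (X : C) (n : ℤ), X ∈ S → X⟦n⟧ ∈ S) ∧
  (∀ T : Triangle C, (T ∈ distTriang C) → T.obj₁ ∈ S → T.obj₂ ∈ S → T.obj₃ ∈ S)

namespace WSAux

variable {C}

lemma retract_refl (X : C) : IsRetractOf C X X := ⟨𝟙 X, 𝟙 X, by simp⟩

lemma retract_trans {X Y Z : C} (h₁ : IsRetractOf C X Y) (h₂ : IsRetractOf C Y Z) :
    IsRetractOf C X Z := by
  obtain ⟨i, r, hir⟩ := h₁
  obtain ⟨j, s, hjs⟩ := h₂
  exact ⟨i ≫ j, s ≫ r, by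
    rw [Category.assoc, ← Category.assoc j, hjs, Category.id_comp, hir]⟩

lemma retract_of_iso {X Y : C} (e : X ≅ Y) : IsRetractOf C X Y :=
  ⟨e.hom, e.inv, e.hom_inv_id⟩

/-- if all maps `X ⟶ T'` vanish and `T ≅ T'` then all maps `X ⟶ T` vanish. -/
lemma zero_of_target_iso {X T T' : C} (e : T ≅ T') (h : ∀ g : X ⟶ T', g = 0)
    (f : X ⟶ T) : f = 0 := by
  have h1 : f ≫ e.hom = 0 := h _
  rw [← Category.comp_id f, ← e.hom_inv_id, ← Category.assoc, h1, zero_comp]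

/-- a map out of a negative shift vanishes provided its conjugate does -/
lemma zero_of_conj {X Y : C} (f : X⟦(-1 : ℤ)⟧ ⟶ Y)
    (h : ∀ g : X ⟶ Y⟦(1 : ℤ)⟧, g = 0) : f = 0 := by
  have h2 : (shiftFunctorCompIsoId C (-1 : ℤ) (1 : ℤ) (by ring)).inv.app X ≫ f⟦(1:ℤ)⟧' = 0 :=
    h _
  have h3 : f⟦(1:ℤ)⟧' = 0 := by
    have := congrArg (fun p => (shiftFunctorCompIsoId C (-1 : ℤ) (1 : ℤ) (by ring)).hom.app X ≫ p) h2
    simpa using this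
  exact (shiftFunctor C (1:ℤ)).map_eq_zero_iff.mp h3

/-- a map into a shift vanishes provided its down conjugate does -/
lemma zero_of_conj_down {W T : C} (f : W ⟶ T⟦(1 : ℤ)⟧)
    (h : (shiftFunctor C (-1:ℤ)).map f ≫
      (shiftFunctorCompIsoId C (1 : ℤ) (-1 : ℤ) (by ring)).hom.app T = 0) : f = 0 := by
  have h3 : (shiftFunctor C (-1:ℤ)).map f = 0 := by
    have := congrArg (fun p => p ≫ (shiftFunctorCompIsoId C (1 : ℤ) (-1 : ℤ) (by ring)).inv.app T) h
    simpa using this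
  exact (shiftFunctor C (-1:ℤ)).map_eq_zero_iff.mp h3

section ExactHelpers

/-- exactness at position `obj₂⟦1⟧` -/
lemma exact₅ (T : Triangle C) (hT : T ∈ distTriang C) {V : C} (f : V ⟶ T.obj₂⟦(1:ℤ)⟧)
    (hf : f ≫ T.mor₂⟦(1:ℤ)⟧' = 0) : ∃ g : V ⟶ T.obj₁⟦(1:ℤ)⟧, f = g ≫ T.mor₁⟦(1:ℤ)⟧' := by
  obtain ⟨g, hg⟩ := Triangle.coyoneda_exact₁ _ (rot_of_distTriang _ hT) f hf
  refine ⟨-g, ?_⟩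
  have h1 : (T.rotate).mor₃ = -T.mor₁⟦(1:ℤ)⟧' := rfl
  rw [hg, h1]
  exact (Preadditive.comp_neg _ _).trans (Preadditive.neg_comp _ _).symm

/-- exactness at position `obj₃⟦1⟧` -/
lemma exact₆ (T : Triangle C) (hT : T ∈ distTriang C) {V : C} (f : V ⟶ T.obj₃⟦(1:ℤ)⟧)
    (hf : f ≫ T.mor₃⟦(1:ℤ)⟧' = 0) : ∃ g : V ⟶ T.obj₂⟦(1:ℤ)⟧, f = g ≫ T.mor₂⟦(1:ℤ)⟧' := by
  obtain ⟨g, hg⟩ := exact₅ _ (rot_of_distTriang _ hT) f hf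
  exact ⟨g, hg⟩

/-- exactness at position `obj₁⟦1⟧⟦1⟧` -/
lemma exact₇ (T : Triangle C) (hT : T ∈ distTriang C) {V : C}
    (f : V ⟶ T.obj₁⟦(1:ℤ)⟧⟦(1:ℤ)⟧)
    (hf : f ≫ (T.mor₁⟦(1:ℤ)⟧')⟦(1:ℤ)⟧' = 0) :
    ∃ g : V ⟶ T.obj₃⟦(1:ℤ)⟧, f = g ≫ T.mor₃⟦(1:ℤ)⟧' := by
  obtain ⟨g, hg⟩ := Triangle.coyoneda_exact₁ _
    (rot_of_distTriang _ (rot_of_distTriang _ (rot_of_distTriang _ hT))) f (by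
      have h1 : (T.rotate.rotate.rotate).mor₁ = -T.mor₁⟦(1:ℤ)⟧' := rfl
      rw [h1]
      exact (by simp [hf] : f ≫ ((-(T.mor₁⟦(1:ℤ)⟧'))⟦(1:ℤ)⟧') = 0))
  refine ⟨-g, ?_⟩
  have h2 : (T.rotate.rotate.rotate).mor₃ = -T.mor₃⟦(1:ℤ)⟧' := rfl
  rw [hg, h2]
  exact (Preadditive.comp_neg _ _).trans (Preadditive.neg_comp _ _).symm

end ExactHelpers



/-- the smallest class of objects containing `S`, stable under negative shifts,
extensions and retracts;  this will be `C^{w ≥ 0}`. -/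
inductive GenGE (S : Set C) : C → Prop
  | of (X : C) (hX : X ∈ S) : GenGE S X
  | shiftNeg (X : C) (hX : GenGE S X) : GenGE S (X⟦(-1 : ℤ)⟧)
  | ext (T : Triangle C) (hT : T ∈ distTriang C) (h₁ : GenGE S T.obj₁)
      (h₃ : GenGE S T.obj₃) : GenGE S T.obj₂
  | retract (X Y : C) (h : IsRetractOf C X Y) (hY : GenGE S Y) : GenGE S X

/-- the left orthogonal class; this will be `C^{w ≤ 0}`. -/
def NegLE (S : Set C) : Set C :=
  {Y | ∀ X : C, GenGE S X → ∀ f : X ⟶ Y⟦(1 : ℤ)⟧, f = 0}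

/-- the smallest class of objects containing `S`, stable under positive shifts,
extensions and retracts. -/
inductive GenLE (S : Set C) : C → Prop
  | of (X : C) (hX : X ∈ S) : GenLE S X
  | shiftPos (X : C) (hX : GenLE S X) : GenLE S (X⟦(1 : ℤ)⟧)
  | ext (T : Triangle C) (hT : T ∈ distTriang C) (h₁ : GenLE S T.obj₁)
      (h₃ : GenLE S T.obj₃) : GenLE S T.obj₂
  | retract (X Y : C) (h : IsRetractOf C X Y) (hY : GenLE S Y) : GenLE S X

lemma GenGE.iso {S : Set C} {X Y : C} (e : X ≅ Y) (hY : GenGE S Y) : GenGE S X :=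
  GenGE.retract X Y ⟨e.hom, e.inv, e.hom_inv_id⟩ hY

lemma GenLE.iso {S : Set C} {X Y : C} (e : X ≅ Y) (hY : GenLE S Y) : GenLE S X :=
  GenLE.retract X Y ⟨e.hom, e.inv, e.hom_inv_id⟩ hY

lemma GenGE.shift_le_zero {S : Set C} {X : C} (hX : GenGE S X) :
    ∀ (k : ℕ), GenGE S (X⟦-(k : ℤ)⟧) := by
  intro k
  induction k with
  | zero => exact GenGE.iso ((shiftFunctorZero C ℤ).app X) hX
  | succ n ih =>
      have e : X⟦-((n+1 : ℕ) : ℤ)⟧ ≅ (X⟦-(n : ℤ)⟧)⟦(-1 : ℤ)⟧ := by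
        refine ((shiftFunctorAdd' C (-(n:ℤ)) (-1 : ℤ) (-((n+1 : ℕ) : ℤ)) (by push_cast; ring)).app X)
      exact GenGE.iso e (GenGE.shiftNeg _ ih)

lemma GenLE.shift_ge_zero {S : Set C} {X : C} (hX : GenLE S X) :
    ∀ (k : ℕ), GenLE S (X⟦(k : ℤ)⟧) := by
  intro k
  induction k with
  | zero => exact GenLE.iso ((shiftFunctorZero C ℤ).app X) hX
  | succ n ih =>
      have e : X⟦((n+1 : ℕ) : ℤ)⟧ ≅ (X⟦(n : ℤ)⟧)⟦(1 : ℤ)⟧ :=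
        (shiftFunctorAdd' C (n : ℤ) (1 : ℤ) ((n+1 : ℕ) : ℤ) (by push_cast; ring)).app X
      exact GenLE.iso e (GenLE.shiftPos _ ih)

section Negativity

variable {S : Set C}

/-- negativity propagates to the generated class `GenGE`. -/
lemma genGE_orth_S (hneg : ∀ X Y : C, X ∈ S → Y ∈ S → ∀ i : ℤ, 0 < i → ∀ f : X ⟶ Y⟦i⟧, f = 0) : ∀ (X : C), GenGE S X → ∀ (Y : C), Y ∈ S → ∀ (i : ℤ), 0 < i →
    ∀ f : X ⟶ Y⟦i⟧, f = 0 := by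
  intro X hX
  induction hX with
  | of Z hZ => exact fun Y hY i hi f => hneg Z Y hZ hY i hi f
  | shiftNeg Z _ ih =>
      intro Y hY i hi f
      refine zero_of_conj f ?_
      intro g
      have e : (Y⟦i⟧)⟦(1:ℤ)⟧ ≅ Y⟦i+1⟧ :=
        ((shiftFunctorAdd' C i (1:ℤ) (i+1) rfl).app Y).symm
      refine zero_of_target_iso e ?_ g
      intro g'
      exact ih Y hY (i+1) (by omega) g'
  | ext T hT h₁ h₃ ih₁ ih₃ =>
      intro Y hY i hi f
      -- use exactness of Hom(-, Y⟦i⟧) on the triangle T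
      have h2 : T.mor₁ ≫ f = 0 := ih₁ Y hY i hi _
      obtain ⟨g, hg⟩ := Triangle.yoneda_exact₂ T hT f h2
      rw [hg, ih₃ Y hY i hi g, comp_zero]
  | retract Z Z' h hZ' ih =>
      intro Y hY i hi f
      obtain ⟨j, r, hjr⟩ := h
      rw [← Category.id_comp f, ← hjr, Category.assoc, ih Y hY i hi (r ≫ f), comp_zero]

end Negativity

section NegLELemmas

variable {S : Set C}

lemma negLE_iso {X Y : C} (e : X ≅ Y) (hY : Y ∈ NegLE S) : X ∈ NegLE S := by
  intro W hW f
  exact zero_of_target_iso ((shiftFunctor C (1:ℤ)).mapIso e) (fun g => hY W hW g) f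

lemma negLE_zero : (0 : C) ∈ NegLE S := by
  intro W hW f
  have hz : IsZero ((0 : C)⟦(1:ℤ)⟧) := (shiftFunctor C (1:ℤ)).map_isZero (isZero_zero C)
  exact hz.eq_of_tgt f 0

lemma negLE_retract {X Y : C} (h : IsRetractOf C X Y) (hY : Y ∈ NegLE S) : X ∈ NegLE S := by
  intro W hW f
  obtain ⟨i, r, hir⟩ := h
  have h1 : f ≫ i⟦(1:ℤ)⟧' = 0 := hY W hW _
  calc f = f ≫ (𝟙 X)⟦(1:ℤ)⟧' := by simp
    _ = (f ≫ i⟦(1:ℤ)⟧') ≫ r⟦(1:ℤ)⟧' := by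
        rw [← hir, Functor.map_comp, Category.assoc]
    _ = 0 := by rw [h1, zero_comp]

lemma negLE_shift {X : C} (hX : X ∈ NegLE S) : X⟦(1:ℤ)⟧ ∈ NegLE S := by
  intro W hW f
  refine zero_of_conj_down f ?_
  exact hX _ (GenGE.shiftNeg W hW) _

lemma negLE_shift_nat {X : C} (hX : X ∈ NegLE S) (k : ℕ) : X⟦(k:ℤ)⟧ ∈ NegLE S := by
  induction k with
  | zero => exact negLE_iso ((shiftFunctorZero C ℤ).app X) hX
  | succ n ih =>
      have e : X⟦((n+1 : ℕ) : ℤ)⟧ ≅ (X⟦(n : ℤ)⟧)⟦(1 : ℤ)⟧ :=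
        (shiftFunctorAdd' C (n : ℤ) (1 : ℤ) ((n+1 : ℕ) : ℤ) (by push_cast; ring)).app X
      exact negLE_iso e (negLE_shift ih)

lemma negLE_ext (T : Triangle C) (hT : T ∈ distTriang C) (h₁ : T.obj₁ ∈ NegLE S)
    (h₃ : T.obj₃ ∈ NegLE S) : T.obj₂ ∈ NegLE S := by
  intro W hW f
  have h2 : f ≫ T.mor₂⟦(1:ℤ)⟧' = 0 := h₃ W hW _
  obtain ⟨g, hg⟩ := exact₅ T hT f h2
  rw [hg, h₁ W hW g, zero_comp]

/-- `Hom(GenGE⟦-1⟧, NegLE) = 0`. -/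
lemma negLE_orth_neg_shift {X Y : C} (hX : GenGE S X) (hY : Y ∈ NegLE S)
    (f : X⟦(-1:ℤ)⟧ ⟶ Y) : f = 0 :=
  zero_of_conj f (fun g => hY X hX g)

lemma S_subset_negLE
    (hneg : ∀ X Y : C, X ∈ S → Y ∈ S → ∀ i : ℤ, 0 < i → ∀ f : X ⟶ Y⟦i⟧, f = 0) :
    S ⊆ NegLE S :=
  fun Y hY W hW f => genGE_orth_S hneg W hW Y hY 1 one_pos f

end NegLELemmas

section KarLemmas

variable {S : Set C}

/-- the Karoubi closure of `S` -/
def Kar (S : Set C) : Set C := {X | ∃ Y : C, Y ∈ S ∧ IsRetractOf C X Y}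

lemma Kar_sub_negLE
    (hneg : ∀ X Y : C, X ∈ S → Y ∈ S → ∀ i : ℤ, 0 < i → ∀ f : X ⟶ Y⟦i⟧, f = 0) :
    Kar S ⊆ NegLE S := by
  rintro X ⟨Y, hY, hr⟩
  exact negLE_retract hr (S_subset_negLE hneg hY)

lemma Kar_sub_genGE : Kar S ⊆ setOf (GenGE S) := by
  rintro X ⟨Y, hY, hr⟩
  exact GenGE.retract X Y hr (GenGE.of Y hY)

lemma Kar_retract {X Y : C} (h : IsRetractOf C X Y) (hY : Y ∈ Kar S) : X ∈ Kar S := by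
  obtain ⟨Z, hZ, hr⟩ := hY
  exact ⟨Z, hZ, retract_trans h hr⟩

lemma Kar_sum (hsum : ∀ X Y : C, X ∈ S → Y ∈ S → (X ⊞ Y) ∈ S)
    {X Y : C} (hX : X ∈ Kar S) (hY : Y ∈ Kar S) : (X ⊞ Y) ∈ Kar S := by
  obtain ⟨Z, hZ, i, r, hir⟩ := hX
  obtain ⟨Z', hZ', i', r', hir'⟩ := hY
  refine ⟨Z ⊞ Z', hsum Z Z' hZ hZ', biprod.map i i', biprod.map r r', ?_⟩
  apply biprod.hom_ext <;> simp [hir, hir']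

end KarLemmas

section HasWD

variable {S : Set C}

/-- `X` admits a weight decomposition. -/
def HasWD (S : Set C) (X : C) : Prop :=
  ∃ (A B : C) (g : X ⟶ A) (f : A ⟶ B) (h : B ⟶ X⟦(1 : ℤ)⟧),
    A ∈ NegLE S ∧ GenGE S B ∧ Triangle.mk g f h ∈ distTriang C

lemma hasWD_of_triangle (T : Triangle C) (hT : T ∈ distTriang C) {X : C} (e : X ≅ T.obj₁)
    (h₂ : T.obj₂ ∈ NegLE S) (h₃ : GenGE S T.obj₃) : HasWD S X := by
  refine ⟨T.obj₂, T.obj₃, e.hom ≫ T.mor₁, T.mor₂, T.mor₃ ≫ e.inv⟦(1:ℤ)⟧', h₂, h₃, ?_⟩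
  refine isomorphic_distinguished _ hT _ ?_
  refine Triangle.isoMk _ _ e (Iso.refl _) (Iso.refl _) ?_ ?_ ?_
  · exact Category.comp_id _
  · exact (Category.comp_id _).trans (Category.id_comp _).symm
  · exact (by simp : (T.mor₃ ≫ e.inv⟦(1:ℤ)⟧') ≫ e.hom⟦(1:ℤ)⟧' = 𝟙 _ ≫ T.mor₃)

lemma hasWD_iso {X Y : C} (e : X ≅ Y) (h : HasWD S Y) : HasWD S X := by
  obtain ⟨A, B, g, f, h3, hA, hB, hd⟩ := h
  exact hasWD_of_triangle _ hd e hA hB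

lemma hasWD_of_mem_negLE (h0 : (0:C) ∈ S) {X : C} (hX : X ∈ NegLE S) : HasWD S X :=
  ⟨X, 0, 𝟙 X, 0, 0, hX, GenGE.of 0 h0, contractible_distinguished X⟩

lemma hasWD_of_shift_genGE {X : C} (hX : GenGE S (X⟦(1:ℤ)⟧)) : HasWD S X :=
  ⟨0, X⟦(1:ℤ)⟧, 0, 0, -(𝟙 X)⟦(1:ℤ)⟧', negLE_zero, hX,
    rot_of_distTriang _ (contractible_distinguished X)⟩

/-- an object left orthogonal to `NegLE S` after one shift belongs to `GenGE S`. -/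
lemma genGE_of_orth {X : C} (hwd : HasWD S (X⟦(-1:ℤ)⟧))
    (hX : ∀ Z : C, Z ∈ NegLE S → ∀ f : X ⟶ Z⟦(1:ℤ)⟧, f = 0) : GenGE S X := by
  obtain ⟨A, B, g, f, h, hA, hB, hd⟩ := hwd
  set TD : Triangle C := Triangle.mk g f h with hTD
  have hdu : (Triangle.shiftFunctor C (1:ℤ)).obj TD ∈ distTriang C :=
    Triangle.shift_distinguished TD hd 1
  set TDu := (Triangle.shiftFunctor C (1:ℤ)).obj TD with hTDu
  have e : TDu.obj₁ ≅ X := (shiftFunctorCompIsoId C (-1:ℤ) (1:ℤ) (by ring)).app X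
  have hm : TDu.mor₁ = 0 := by
    have h1 : e.inv ≫ TDu.mor₁ = 0 := hX A hA _
    calc TDu.mor₁ = (e.hom ≫ e.inv) ≫ TDu.mor₁ := by rw [e.hom_inv_id, Category.id_comp]
      _ = e.hom ≫ (e.inv ≫ TDu.mor₁) := by rw [Category.assoc]
      _ = 0 := by rw [h1, comp_zero]
  have hdv : TDu.invRotate ∈ distTriang C := inv_rot_of_distTriang _ hdu
  obtain ⟨y, hy⟩ := Triangle.coyoneda_exact₂ _ hdv (𝟙 (TDu.invRotate.obj₂)) (by
    have : TDu.invRotate.mor₂ = TDu.mor₁ := rfl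
    rw [Category.id_comp, this, hm]
    rfl)
  have hretr : IsRetractOf C TDu.obj₁ (TDu.invRotate.obj₁) := ⟨y, TDu.invRotate.mor₁, hy.symm⟩
  have e₂ : TDu.invRotate.obj₁ ≅ B := (shiftFunctorCompIsoId C (1:ℤ) (-1:ℤ) (by ring)).app B
  refine GenGE.retract X B ?_ hB
  exact retract_trans (retract_of_iso e.symm) (retract_trans hretr (retract_of_iso e₂))

end HasWD

section Cone

variable {S : Set C}

/-- The cone construction: given a distinguished triangle `P ⟶ X ⟶ R ⟶ P⟦1⟧`,
if `P` and `R` admit weight decompositions, so does `X`. -/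
lemma hasWD_cone (T : Triangle C) (hT : T ∈ distTriang C)
    (hP : HasWD S T.obj₁) (hR : HasWD S T.obj₃) : HasWD S T.obj₂ := by
  obtain ⟨AP, BP, gP, fP, hP', hAP, hBP, hdP⟩ := hP
  obtain ⟨AR, BR, gR, fR, hR', hAR, hBR, hdR⟩ := hR
  -- the rotated target triangle (R, P⟦1⟧, X⟦1⟧)
  set T2 := T.rotate.rotate with hT2def
  have hT2 : T2 ∈ distTriang C := rot_of_distTriang _ (rot_of_distTriang _ hT)
  -- decomposition of P, shifted up
  set TQ := (Triangle.shiftFunctor C (1:ℤ)).obj (Triangle.mk gP fP hP') with hTQdef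
  have hdQ : TQ ∈ distTriang C := Triangle.shift_distinguished _ hdP 1
  set TQv := TQ.invRotate with hTQvdef
  have hdQv : TQv ∈ distTriang C := inv_rot_of_distTriang _ hdQ
  -- decomposition of R, derotated
  set TRv := (Triangle.mk gR fR hR').invRotate with hTRvdef
  have hdRv : TRv ∈ distTriang C := inv_rot_of_distTriang _ hdR
  -- basic vanishing facts
  have vAQ : ∀ {W : C}, GenGE S W → ∀ f : W ⟶ TQv.obj₃, f = 0 := by
    intro W hW f
    exact hAP W hW f
  have vAR1 : ∀ {W : C}, GenGE S W → ∀ f : W ⟶ TRv.obj₃⟦(1:ℤ)⟧, f = 0 := by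
    intro W hW f
    exact hAR W hW f
  -- `TQv.obj₂ = P⟦1⟧ = T2.obj₂` and `TRv.obj₂ = R = T2.obj₁` definitionally
  -- construct the comparison map δ
  have hc0 : (TRv.mor₁ ≫ T2.mor₁) ≫ TQv.mor₂ = 0 := by
    refine negLE_orth_neg_shift hBR (negLE_shift hAP) ?_
  obtain ⟨δ, hδ⟩ := Triangle.coyoneda_exact₂ _ hdQv (TRv.mor₁ ≫ T2.mor₁) hc0
  obtain ⟨D, m, n, hΘ⟩ := distinguished_cocone_triangle δ
  set Θ : Triangle C := Triangle.mk δ m n with hΘdef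
  -- the morphism of triangles
  obtain ⟨ψ, hs2, hs3⟩ := complete_distinguished_triangle_morphism Θ T2 hΘ hT2
    TRv.mor₁ TQv.mor₁ (by
      have : Θ.mor₁ = δ := rfl
      exact hδ.symm)
  obtain ⟨H, ρ, σ, hΨ⟩ := distinguished_cocone_triangle ψ
  set Ψ : Triangle C := Triangle.mk ψ ρ σ with hΨdef
  -- injectivity of (·) ≫ TQv.mor₁⟦1⟧
  have hQinj : ∀ {W : C}, GenGE S W → ∀ x' : W ⟶ TQv.obj₁⟦(1:ℤ)⟧,
      x' ≫ TQv.mor₁⟦(1:ℤ)⟧' = 0 → x' = 0 := by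
    intro W hW x' hx'
    obtain ⟨y', hy'⟩ := Triangle.coyoneda_exact₁ _ hdQv x' hx'
    rw [hy', vAQ hW y', zero_comp]
  -- surjectivity (i)
  have surj : ∀ {W : C}, GenGE S W → ∀ x : W ⟶ T2.obj₃, ∃ d : W ⟶ D, x = d ≫ ψ := by
    intro W hW x
    have hu0 : (x ≫ T2.mor₃) ≫ TRv.mor₂⟦(1:ℤ)⟧' = 0 := by
      have h1 : ((x ≫ T2.mor₃) ≫ TRv.mor₂⟦(1:ℤ)⟧') ≫ (Iso.refl (TRv.obj₃⟦(1:ℤ)⟧)).hom = 0 :=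
        vAR1 hW _
      simpa using h1
    obtain ⟨y₁, hy₁⟩ := exact₅ TRv hdRv (x ≫ T2.mor₃) hu0
    have hyδ : (y₁ ≫ Θ.mor₁⟦(1:ℤ)⟧') ≫ TQv.mor₁⟦(1:ℤ)⟧' = 0 := by
      have e1 : Θ.mor₁ ≫ TQv.mor₁ = TRv.mor₁ ≫ T2.mor₁ := by
        have : Θ.mor₁ = δ := rfl
        exact hδ.symm
      erw [Category.assoc, ← Functor.map_comp, e1, Functor.map_comp, ← Category.assoc, ← hy₁,
        Category.assoc, comp_distTriang_mor_zero₃₁ _ hT2, comp_zero]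
    have hδ0 : y₁ ≫ Θ.mor₁⟦(1:ℤ)⟧' = 0 := hQinj hW _ hyδ
    obtain ⟨w₁, hw₁⟩ := Triangle.coyoneda_exact₁ _ hΘ y₁ hδ0
    have hx' : (x - w₁ ≫ ψ) ≫ T2.mor₃ = 0 := by
      erw [Preadditive.sub_comp, Category.assoc, ← hs3, ← Category.assoc, ← hw₁, ← hy₁, sub_self]
    obtain ⟨p, hp⟩ := Triangle.coyoneda_exact₃ _ hT2 (x - w₁ ≫ ψ) hx'
    have hp0 : p ≫ TQv.mor₂ = 0 := vAQ hW _
    obtain ⟨p', hp'⟩ := Triangle.coyoneda_exact₂ _ hdQv p hp0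
    refine ⟨w₁ + p' ≫ Θ.mor₂, ?_⟩
    erw [Preadditive.add_comp, Category.assoc, hs2, ← Category.assoc, ← hp', ← hp]
    exact (add_sub_cancel _ _).symm
  -- injectivity (ii)
  have inj : ∀ {W : C}, GenGE S W → ∀ x : W ⟶ D⟦(1:ℤ)⟧,
      x ≫ ψ⟦(1:ℤ)⟧' = 0 → x = 0 := by
    intro W hW x hx
    have hz : (x ≫ Θ.mor₃⟦(1:ℤ)⟧') ≫ (TRv.mor₁⟦(1:ℤ)⟧')⟦(1:ℤ)⟧' = 0 := by
      erw [Category.assoc, ← Functor.map_comp, hs3, Functor.map_comp, ← Category.assoc, hx,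
        zero_comp]
    obtain ⟨g, hg⟩ := exact₇ TRv hdRv (x ≫ Θ.mor₃⟦(1:ℤ)⟧') hz
    have hz0 : x ≫ Θ.mor₃⟦(1:ℤ)⟧' = 0 := by
      erw [hg, vAR1 hW g, zero_comp]
      rfl
    obtain ⟨y, hy⟩ := exact₆ Θ hΘ x hz0
    have h3 : (y ≫ TQv.mor₁⟦(1:ℤ)⟧') ≫ T2.mor₂⟦(1:ℤ)⟧' = 0 := by
      erw [Category.assoc, ← Functor.map_comp, ← hs2, Functor.map_comp, ← Category.assoc, ← hy, hx]
    obtain ⟨v, hv⟩ := exact₅ T2 hT2 (y ≫ TQv.mor₁⟦(1:ℤ)⟧') h3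
    have hv0 : v ≫ TRv.mor₂⟦(1:ℤ)⟧' = 0 := vAR1 hW _
    obtain ⟨v', hv'⟩ := exact₅ TRv hdRv v hv0
    have h5 : (y - v' ≫ Θ.mor₁⟦(1:ℤ)⟧') ≫ TQv.mor₁⟦(1:ℤ)⟧' = 0 := by
      have e1 : Θ.mor₁ ≫ TQv.mor₁ = TRv.mor₁ ≫ T2.mor₁ := by
        have : Θ.mor₁ = δ := rfl
        exact hδ.symm
      erw [Preadditive.sub_comp, Category.assoc, ← Functor.map_comp, e1, Functor.map_comp,
        ← Category.assoc, ← hv', ← hv, sub_self]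
    have h6 : y = v' ≫ Θ.mor₁⟦(1:ℤ)⟧' := by
      have := hQinj hW _ h5
      erw [sub_eq_zero] at this
      exact this
    erw [hy, h6, Category.assoc, ← Functor.map_comp, comp_distTriang_mor_zero₁₂ _ hΘ]
    exact (by simp : v' ≫ (0 : TRv.obj₁ ⟶ Θ.obj₃)⟦(1:ℤ)⟧' = 0)
  -- all maps from GenGE to H vanish
  have hH : ∀ {W : C}, GenGE S W → ∀ φ : W ⟶ H, φ = 0 := by
    intro W hW φ
    have h1 : (φ ≫ Ψ.mor₃) ≫ ψ⟦(1:ℤ)⟧' = 0 := by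
      erw [Category.assoc]
      have := comp_distTriang_mor_zero₃₁ _ hΨ
      have h2 : Ψ.mor₃ ≫ ψ⟦(1:ℤ)⟧' = 0 := this
      exact (congrArg (fun t => φ ≫ t) h2).trans comp_zero
    have h2 : φ ≫ Ψ.mor₃ = 0 := inj hW _ h1
    obtain ⟨g, hg⟩ := Triangle.coyoneda_exact₃ _ hΨ φ h2
    obtain ⟨d, hd⟩ := surj hW g
    have h0 : ψ ≫ Ψ.mor₂ = 0 := comp_distTriang_mor_zero₁₂ _ hΨ
    erw [hg, hd, Category.assoc, h0, comp_zero]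
    rfl
  -- membership of D
  have hD : GenGE S D := by
    have h1 : GenGE S (Θ.rotate.obj₁) :=
      GenGE.iso ((shiftFunctorCompIsoId C (1:ℤ) (-1:ℤ) (by ring)).app BP) hBP
    have h3 : GenGE S (Θ.rotate.obj₃) :=
      GenGE.iso ((shiftFunctorCompIsoId C (-1:ℤ) (1:ℤ) (by ring)).app BR) hBR
    exact GenGE.ext _ (rot_of_distTriang _ hΘ) h1 h3
  -- the final triangle
  set T' := (Triangle.shiftFunctor C (-1:ℤ)).obj Ψ.rotate with hT'def
  have hdT' : T' ∈ distTriang C :=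
    Triangle.shift_distinguished _ (rot_of_distTriang _ hΨ) (-1)
  refine hasWD_of_triangle T' hdT'
    (((shiftFunctorCompIsoId C (1:ℤ) (-1:ℤ) (by ring)).app T.obj₂).symm) ?_ ?_
  · -- T'.obj₂ = H⟦-1⟧ ∈ NegLE S
    intro W hW f
    refine zero_of_target_iso ((shiftFunctorCompIsoId C (-1:ℤ) (1:ℤ) (by ring)).app H)
      (fun g => hH hW g) f
  · -- T'.obj₃ = D⟦1⟧⟦-1⟧
    exact GenGE.iso ((shiftFunctorCompIsoId C (1:ℤ) (-1:ℤ) (by ring)).app D) hD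

end Cone

section Existence

variable {S : Set C}

lemma hasWD_all (hzero : (0 : C) ∈ S)
    (hneg : ∀ X Y : C, X ∈ S → Y ∈ S → ∀ i : ℤ, 0 < i → ∀ f : X ⟶ Y⟦i⟧, f = 0)
    (hgen : ∀ X : C, ∀ T : Set C, IsTriangulatedClass C T → S ⊆ T → X ∈ T)
    (X : C) : HasWD S X := by
  set T₀ : Set C := {X | ∀ n : ℤ, HasWD S (X⟦n⟧)} with hT₀
  have htc : IsTriangulatedClass C T₀ := by
    refine ⟨?_, ?_, ?_, ?_⟩
    · intro n
      refine hasWD_of_mem_negLE hzero (negLE_iso ?_ negLE_zero)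
      exact (shiftFunctor C n).mapZeroObject
    · intro X Y hX ⟨e⟩ n
      exact hasWD_iso ((shiftFunctor C n).mapIso e.symm) (hX n)
    · intro X k hX n
      exact hasWD_iso (((shiftFunctorAdd' C k n (k + n) rfl).app X).symm) (hX (k + n))
    · intro T hT h₁ h₂ n
      have hTn : (Triangle.shiftFunctor C n).obj T ∈ distTriang C :=
        Triangle.shift_distinguished _ hT n
      have hrot : ((Triangle.shiftFunctor C n).obj T).rotate ∈ distTriang C :=
        rot_of_distTriang _ hTn
      refine hasWD_cone _ hrot (h₂ n) ?_
      exact hasWD_iso (((shiftFunctorAdd' C n 1 (n + 1) rfl).app T.obj₁).symm) (h₁ (n + 1))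
  have hX0 : X ∈ T₀ := hgen X T₀ htc (by
    intro Y hY n
    rcases le_or_gt 0 n with hn | hn
    · obtain ⟨k, rfl⟩ := Int.eq_ofNat_of_zero_le hn
      exact hasWD_of_mem_negLE hzero (negLE_shift_nat (S_subset_negLE hneg hY) k)
    · refine hasWD_of_shift_genGE ?_
      have h1 : GenGE S (Y⟦n + 1⟧) := by
        obtain ⟨k, hk⟩ := Int.eq_ofNat_of_zero_le (by omega : (0:ℤ) ≤ -(n+1))
        have := GenGE.shift_le_zero (GenGE.of Y hY) k
        have e : Y⟦n + 1⟧ ≅ Y⟦-(k : ℤ)⟧ := eqToIso (by rw [← hk]; ring_nf)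
        exact GenGE.iso e this
      exact GenGE.iso (((shiftFunctorAdd' C n 1 (n+1) rfl).app Y).symm) h1)
  exact hasWD_iso (((shiftFunctorZero C ℤ).app X).symm) (hX0 0)

end Existence

section CoSUR

variable {S : Set C}

lemma coSUR (hzero : (0 : C) ∈ S)
    (hsum : ∀ X Y : C, X ∈ S → Y ∈ S → (X ⊞ Y) ∈ S)
    (hneg : ∀ X Y : C, X ∈ S → Y ∈ S → ∀ i : ℤ, 0 < i → ∀ f : X ⟶ Y⟦i⟧, f = 0)
    {B : C} (hB : GenGE S B) :
    ∃ (Q : C) (u : B ⟶ Q), Q ∈ Kar S ∧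
      ∀ Z : C, Z ∈ NegLE S → ∀ f : B ⟶ Z, ∃ g : Q ⟶ Z, f = u ≫ g := by
  induction hB with
  | of X hX =>
      exact ⟨X, 𝟙 X, ⟨X, hX, retract_refl X⟩, fun Z hZ f => ⟨f, by simp⟩⟩
  | shiftNeg X hX ih =>
      refine ⟨0, 0, ⟨0, hzero, retract_refl 0⟩, fun Z hZ f => ⟨0, ?_⟩⟩
      rw [negLE_orth_neg_shift hX hZ f, zero_comp]
  | ext T hT h₁ h₃ ih₁ ih₃ =>
      obtain ⟨Q₁, u₁, hQ₁, hu₁⟩ := ih₁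
      obtain ⟨Q₃, u₃, hQ₃, hu₃⟩ := ih₃
      have hTv : T.invRotate ∈ distTriang C := inv_rot_of_distTriang _ hT
      have hk : T.invRotate.mor₁ ≫ u₁ = 0 :=
        negLE_orth_neg_shift h₃ (Kar_sub_negLE hneg hQ₁) _
      obtain ⟨ubar0, hub⟩ := Triangle.yoneda_exact₂ _ hTv u₁ hk
      let ubar : T.obj₂ ⟶ Q₁ := ubar0
      have e2 : u₁ = T.mor₁ ≫ ubar := hub
      refine ⟨Q₁ ⊞ Q₃, biprod.lift ubar (T.mor₂ ≫ u₃), Kar_sum hsum hQ₁ hQ₃, ?_⟩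
      intro Z hZ f
      obtain ⟨g₁, hg₁⟩ := hu₁ Z hZ (T.mor₁ ≫ f)
      have h0 : T.mor₁ ≫ (f - ubar ≫ g₁) = 0 := by
        rw [Preadditive.comp_sub, ← Category.assoc, ← e2, ← hg₁, sub_self]
      obtain ⟨h', hh'⟩ := Triangle.yoneda_exact₂ _ hT (f - ubar ≫ g₁) h0
      obtain ⟨g₃, hg₃⟩ := hu₃ Z hZ h'
      refine ⟨biprod.desc g₁ g₃, ?_⟩
      rw [biprod.lift_desc, Category.assoc, ← hg₃, ← hh']
      abel
  | retract X Y h hY ih =>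
      obtain ⟨Q, u, hQ, hu⟩ := ih
      obtain ⟨i, r, hir⟩ := h
      refine ⟨Q, i ≫ u, hQ, fun Z hZ f => ?_⟩
      obtain ⟨g, hg⟩ := hu Z hZ (r ≫ f)
      refine ⟨g, ?_⟩
      rw [Category.assoc, ← hg, ← Category.assoc, hir, Category.id_comp]

lemma heart_sub_Kar (hzero : (0 : C) ∈ S)
    (hsum : ∀ X Y : C, X ∈ S → Y ∈ S → (X ⊞ Y) ∈ S)
    (hneg : ∀ X Y : C, X ∈ S → Y ∈ S → ∀ i : ℤ, 0 < i → ∀ f : X ⟶ Y⟦i⟧, f = 0)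
    {X : C} (hXLE : X ∈ NegLE S) (hXGE : GenGE S X) : X ∈ Kar S := by
  obtain ⟨Q, u, hQ, hu⟩ := coSUR hzero hsum hneg hXGE
  obtain ⟨g, hg⟩ := hu X hXLE (𝟙 X)
  exact Kar_retract ⟨u, g, hg.symm⟩ hQ

end CoSUR

section Bounded

variable {S : Set C}

lemma genGE_shift_down {X : C} {l l' : ℤ} (h : GenGE S (X⟦l⟧)) (hle : l' ≤ l) :
    GenGE S (X⟦l'⟧) := by
  obtain ⟨k, hk⟩ := Int.eq_ofNat_of_zero_le (sub_nonneg.mpr hle)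
  have h1 : GenGE S ((X⟦l⟧)⟦-(k : ℤ)⟧) := GenGE.shift_le_zero h k
  refine GenGE.iso ?_ h1
  refine (shiftFunctorAdd' C l (-(k:ℤ)) l' (by omega)).app X

lemma negLE_shift_up {X : C} {l l' : ℤ} (h : X⟦l⟧ ∈ NegLE S) (hle : l ≤ l') :
    X⟦l'⟧ ∈ NegLE S := by
  obtain ⟨k, hk⟩ := Int.eq_ofNat_of_zero_le (sub_nonneg.mpr hle)
  have h1 : (X⟦l⟧)⟦(k : ℤ)⟧ ∈ NegLE S := negLE_shift_nat h k
  refine negLE_iso ?_ h1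
  refine (shiftFunctorAdd' C l (k:ℤ) l' (by omega)).app X

lemma bounded_all (hzero : (0 : C) ∈ S)
    (hneg : ∀ X Y : C, X ∈ S → Y ∈ S → ∀ i : ℤ, 0 < i → ∀ f : X ⟶ Y⟦i⟧, f = 0)
    (hgen : ∀ X : C, ∀ T : Set C, IsTriangulatedClass C T → S ⊆ T → X ∈ T)
    (X : C) : (∃ l : ℤ, X⟦l⟧ ∈ NegLE S) ∧ (∃ l : ℤ, GenGE S (X⟦l⟧)) := by
  set Tb : Set C := {X | (∃ l : ℤ, X⟦l⟧ ∈ NegLE S) ∧ (∃ l : ℤ, GenGE S (X⟦l⟧))} with hTb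
  have htc : IsTriangulatedClass C Tb := by
    refine ⟨⟨⟨0, ?_⟩, ⟨0, ?_⟩⟩, ?_, ?_, ?_⟩
    · exact negLE_iso ((shiftFunctor C (0:ℤ)).mapZeroObject) negLE_zero
    · exact GenGE.iso ((shiftFunctor C (0:ℤ)).mapZeroObject) (GenGE.of 0 hzero)
    · rintro X Y ⟨⟨l₁, h₁⟩, ⟨l₂, h₂⟩⟩ ⟨e⟩
      exact ⟨⟨l₁, negLE_iso ((shiftFunctor C l₁).mapIso e.symm) h₁⟩,
        ⟨l₂, GenGE.iso ((shiftFunctor C l₂).mapIso e.symm) h₂⟩⟩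
    · rintro X n ⟨⟨l₁, h₁⟩, ⟨l₂, h₂⟩⟩
      constructor
      · exact ⟨l₁ - n, negLE_iso (((shiftFunctorAdd' C n (l₁ - n) l₁ (by ring)).app X).symm) h₁⟩
      · exact ⟨l₂ - n, GenGE.iso (((shiftFunctorAdd' C n (l₂ - n) l₂ (by ring)).app X).symm) h₂⟩
    · rintro T hT ⟨⟨l₁, h₁⟩, ⟨l₂, h₂⟩⟩ ⟨⟨l₃, h₃⟩, ⟨l₄, h₄⟩⟩
      constructor
      · -- NegLE bound for T.obj₃
        set l := max l₁ l₃ with hl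
        have hTn : ((Triangle.shiftFunctor C l).obj T).rotate ∈ distTriang C :=
          rot_of_distTriang _ (Triangle.shift_distinguished _ hT l)
        refine ⟨l, negLE_ext _ hTn ?_ ?_⟩
        · exact negLE_shift_up h₃ (le_max_right _ _)
        · exact negLE_shift (negLE_shift_up h₁ (le_max_left _ _))
      · -- GenGE bound for T.obj₃
        set l := min (l₂ - 1) l₄ with hl
        have hTn : ((Triangle.shiftFunctor C l).obj T).rotate ∈ distTriang C :=
          rot_of_distTriang _ (Triangle.shift_distinguished _ hT l)
        refine ⟨l, GenGE.ext _ hTn ?_ ?_⟩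
        · exact genGE_shift_down h₄ (min_le_right _ _)
        · refine GenGE.iso (((shiftFunctorAdd' C l 1 (l+1) rfl).app T.obj₁).symm) ?_
          exact genGE_shift_down h₂ (by omega)
  refine hgen X Tb htc ?_
  intro Y hY
  exact ⟨⟨0, negLE_iso ((shiftFunctorZero C ℤ).app Y) (S_subset_negLE hneg hY)⟩,
    ⟨0, GenGE.iso ((shiftFunctorZero C ℤ).app Y) (GenGE.of Y hY)⟩⟩

end Bounded

section LemmaL

variable {S : Set C}

lemma negLE_sub_genLE (hzero : (0 : C) ∈ S)
    (hsum : ∀ X Y : C, X ∈ S → Y ∈ S → (X ⊞ Y) ∈ S)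
    (hneg : ∀ X Y : C, X ∈ S → Y ∈ S → ∀ i : ℤ, 0 < i → ∀ f : X ⟶ Y⟦i⟧, f = 0)
    (hgen : ∀ X : C, ∀ T : Set C, IsTriangulatedClass C T → S ⊆ T → X ∈ T) :
    ∀ (k : ℕ) (X : C), X ∈ NegLE S → GenGE S (X⟦-(k : ℤ)⟧) → GenLE S X := by
  intro k
  induction k with
  | zero =>
      intro X hXLE hXGE
      have hX : GenGE S X := GenGE.iso ((shiftFunctorZero C ℤ).app X).symm hXGE
      obtain ⟨Y, hY, hr⟩ := heart_sub_Kar hzero hsum hneg hXLE hX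
      exact GenLE.retract X Y hr (GenLE.of Y hY)
  | succ k ih =>
      intro X hXLE hXGE
      obtain ⟨A₀, B₀, g₀, f₀, h₀, hA₀, hB₀, hd₀⟩ :=
        hasWD_all hzero hneg hgen (X⟦(-1:ℤ)⟧)
      set TD : Triangle C := Triangle.mk g₀ f₀ h₀ with hTDdef
      have eX : TD.obj₁⟦(1:ℤ)⟧ ≅ X := (shiftFunctorCompIsoId C (-1:ℤ) (1:ℤ) (by ring)).app X
      -- B₀ is in the heart, hence in `Kar S ⊆ GenLE S`
      have hB₀LE : B₀ ∈ NegLE S := by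
        have h1 : TD.rotate.obj₃ ∈ NegLE S := negLE_iso eX hXLE
        exact negLE_ext _ (rot_of_distTriang _ hd₀) hA₀ h1
      have hB₀K : B₀ ∈ Kar S := heart_sub_Kar hzero hsum hneg hB₀LE hB₀
      have hB₀gl : GenLE S B₀ := by
        obtain ⟨Y, hY, hr⟩ := hB₀K
        exact GenLE.retract B₀ Y hr (GenLE.of Y hY)
      -- A₀ is bounded below at level `k`
      have hA₀GE : GenGE S (A₀⟦-(k:ℤ)⟧) := by
        have hTDk : (Triangle.shiftFunctor C (-(k:ℤ))).obj TD ∈ distTriang C :=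
          Triangle.shift_distinguished _ hd₀ (-(k:ℤ))
        have h1 : GenGE S (((Triangle.shiftFunctor C (-(k:ℤ))).obj TD).obj₁) := by
          refine GenGE.iso (((shiftFunctorAdd' C (-1:ℤ) (-(k:ℤ))
            (-((k+1 : ℕ) : ℤ)) (by push_cast; ring)).app X).symm) hXGE
        have h3 : GenGE S (((Triangle.shiftFunctor C (-(k:ℤ))).obj TD).obj₃) :=
          GenGE.shift_le_zero hB₀ k
        exact GenGE.ext _ hTDk h1 h3
      have hA₀gl : GenLE S A₀ := ih A₀ hA₀ hA₀GE
      -- conclude via the extension X = [B₀ → X → A₀⟦1⟧]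
      set TDu := (Triangle.shiftFunctor C (1:ℤ)).obj TD with hTDudef
      have hTDv : TDu.invRotate ∈ distTriang C :=
        inv_rot_of_distTriang _ (Triangle.shift_distinguished _ hd₀ 1)
      have h1 : GenLE S (TDu.invRotate.obj₁) :=
        GenLE.iso ((shiftFunctorCompIsoId C (1:ℤ) (-1:ℤ) (by ring)).app B₀) hB₀gl
      have h3 : GenLE S (TDu.invRotate.obj₃) := GenLE.shiftPos A₀ hA₀gl
      have h2 : GenLE S (TDu.invRotate.obj₂) := GenLE.ext _ hTDv h1 h3
      exact GenLE.iso eX.symm h2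

end LemmaL

end WSAux

namespace WSAux

variable {C}

section WSLemmas

variable (w' : WeightStructure C)

lemma ws_mem_LE_of_orth {Y : C}
    (h : ∀ X, X ∈ w'.GE → ∀ f : X ⟶ Y⟦(1:ℤ)⟧, f = 0) : Y ∈ w'.LE := by
  obtain ⟨A, B, g, f, h', hA, hB, hd⟩ := w'.exists_weight_decomposition Y
  set TD : Triangle C := Triangle.mk g f h' with hTDdef
  have hTv : TD.invRotate ∈ distTriang C := inv_rot_of_distTriang _ hd
  have hk : TD.invRotate.mor₁ = 0 := by
    refine zero_of_conj _ (fun g' : B ⟶ Y⟦(1:ℤ)⟧ => h B hB g')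
  obtain ⟨r, hr⟩ := Triangle.yoneda_exact₂ _ hTv (𝟙 (TD.invRotate.obj₂)) (by
    rw [Category.comp_id, hk])
  exact w'.retract_mem_LE Y A ⟨g, r, hr.symm⟩ hA

lemma ws_LE_ext (T : Triangle C) (hT : T ∈ distTriang C) (h₁ : T.obj₁ ∈ w'.LE)
    (h₃ : T.obj₃ ∈ w'.LE) : T.obj₂ ∈ w'.LE := by
  refine ws_mem_LE_of_orth w' ?_
  intro X hX f
  have h2 : f ≫ T.mor₂⟦(1:ℤ)⟧' = 0 := w'.orthogonal X T.obj₃ hX h₃ _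
  obtain ⟨y, hy⟩ := exact₅ T hT f h2
  rw [hy, w'.orthogonal X T.obj₁ hX h₁ y, zero_comp]

lemma ws_mem_GE_of_orth {X : C}
    (h : ∀ Z, Z ∈ w'.LE → ∀ f : X ⟶ Z⟦(1:ℤ)⟧, f = 0) : X ∈ w'.GE := by
  obtain ⟨A, B, g, f, h', hA, hB, hd⟩ := w'.exists_weight_decomposition (X⟦(-1:ℤ)⟧)
  set TD : Triangle C := Triangle.mk g f h' with hTDdef
  have hdu : (Triangle.shiftFunctor C (1:ℤ)).obj TD ∈ distTriang C :=
    Triangle.shift_distinguished TD hd 1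
  set TDu := (Triangle.shiftFunctor C (1:ℤ)).obj TD with hTDu
  have e : TDu.obj₁ ≅ X := (shiftFunctorCompIsoId C (-1:ℤ) (1:ℤ) (by ring)).app X
  have hm : TDu.mor₁ = 0 := by
    have h1 : e.inv ≫ TDu.mor₁ = 0 := h A hA _
    calc TDu.mor₁ = (e.hom ≫ e.inv) ≫ TDu.mor₁ := by rw [e.hom_inv_id, Category.id_comp]
      _ = e.hom ≫ (e.inv ≫ TDu.mor₁) := by rw [Category.assoc]
      _ = 0 := by rw [h1, comp_zero]
  have hdv : TDu.invRotate ∈ distTriang C := inv_rot_of_distTriang _ hdu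
  obtain ⟨y, hy⟩ := Triangle.coyoneda_exact₂ _ hdv (𝟙 (TDu.invRotate.obj₂)) (by
    have h2 : TDu.invRotate.mor₂ = TDu.mor₁ := rfl
    rw [Category.id_comp, h2, hm]
    rfl)
  have hBmem : TDu.invRotate.obj₁ ∈ w'.GE :=
    w'.retract_mem_GE _ B
      (retract_of_iso ((shiftFunctorCompIsoId C (1:ℤ) (-1:ℤ) (by ring)).app B)) hB
  refine w'.retract_mem_GE X _ ?_ hBmem
  exact retract_trans (retract_of_iso e.symm) ⟨y, TDu.invRotate.mor₁, hy.symm⟩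

lemma ws_GE_ext (T : Triangle C) (hT : T ∈ distTriang C) (h₁ : T.obj₁ ∈ w'.GE)
    (h₃ : T.obj₃ ∈ w'.GE) : T.obj₂ ∈ w'.GE := by
  refine ws_mem_GE_of_orth w' ?_
  intro Z hZ f
  have h2 : T.mor₁ ≫ f = 0 := w'.orthogonal _ _ h₁ hZ _
  obtain ⟨y, hy⟩ := Triangle.yoneda_exact₂ _ hT f h2
  rw [hy, w'.orthogonal _ _ h₃ hZ y, comp_zero]

end WSLemmas

end WSAux

/-- Theorem 4.3.2(II) of Bondarko: if `S` is (the object class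
of) a full additive subcategory of `C` which is negative and generates `C` as
a triangulated category, then there is a unique weight structure `w` on `C`
with `S ⊆ C^{w=0}`; it is bounded, and its heart is exactly the Karoubi-closure
of `S` in `C`. -/
theorem weightStructure_generated_by_negative_subcategory (S : Set C)
    (hzero : (0 : C) ∈ S)
    (hsum : ∀ X Y : C, X ∈ S → Y ∈ S → (X ⊞ Y) ∈ S)
    (hneg : ∀ X Y : C, X ∈ S → Y ∈ S → ∀ i : ℤ, 0 < i → ∀ f : X ⟶ Y⟦i⟧, f = 0)
    (hgen : ∀ X : C, ∀ T : Set C, IsTriangulatedClass C T → S ⊆ T → X ∈ T) :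
    ∃ w : WeightStructure C,
      S ⊆ w.LE ∩ w.GE ∧
      (∀ X : C, (∃ l : ℤ, X⟦l⟧ ∈ w.LE) ∧ (∃ l : ℤ, X⟦l⟧ ∈ w.GE)) ∧
      (∀ w' : WeightStructure C, S ⊆ w'.LE ∩ w'.GE →
        w'.LE = w.LE ∧ w'.GE = w.GE) ∧
      w.LE ∩ w.GE = {X : C | ∃ Y : C, Y ∈ S ∧ IsRetractOf C X Y} := by
  refine ⟨{
    LE := WSAux.NegLE S
    GE := setOf (WSAux.GenGE S)
    zero_mem_LE := WSAux.negLE_zero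
    zero_mem_GE := WSAux.GenGE.of 0 hzero
    sum_mem_LE := fun X Y hX hY =>
      WSAux.negLE_ext _ (binaryBiproductTriangle_distinguished X Y) hX hY
    sum_mem_GE := fun X Y hX hY =>
      WSAux.GenGE.ext _ (binaryBiproductTriangle_distinguished X Y) hX hY
    retract_mem_LE := fun X Y h hY => WSAux.negLE_retract h hY
    retract_mem_GE := fun X Y h hY => WSAux.GenGE.retract X Y h hY
    shift_mem_LE := fun X hX => WSAux.negLE_shift hX
    shift_mem_GE := fun X hX => WSAux.GenGE.shiftNeg X hX
    orthogonal := fun X Y hX hY f => hY X hX f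
    exists_weight_decomposition := fun X => WSAux.hasWD_all hzero hneg hgen X },
    ?_, ?_, ?_, ?_⟩
  · -- S is contained in the heart
    intro Y hY
    exact ⟨WSAux.S_subset_negLE hneg hY, WSAux.GenGE.of Y hY⟩
  · -- boundedness
    intro X
    exact WSAux.bounded_all hzero hneg hgen X
  · -- uniqueness
    intro w' hS'
    have hGEsub : ∀ X : C, WSAux.GenGE S X → X ∈ w'.GE := by
      intro X hX
      induction hX with
      | of X hX => exact (hS' hX).2
      | shiftNeg X _ ih => exact w'.shift_mem_GE X ih
      | ext T hT _ _ ih₁ ih₃ => exact WSAux.ws_GE_ext w' T hT ih₁ ih₃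
      | retract X Y h _ ih => exact w'.retract_mem_GE X Y h ih
    have hLE'sub : w'.LE ⊆ WSAux.NegLE S :=
      fun Y hY X hX f => w'.orthogonal X Y (hGEsub X hX) hY f
    have hGLEsub : ∀ Y : C, WSAux.GenLE S Y → Y ∈ w'.LE := by
      intro Y hY
      induction hY with
      | of Y hY => exact (hS' hY).1
      | shiftPos Y _ ih => exact w'.shift_mem_LE Y ih
      | ext T hT _ _ ih₁ ih₃ => exact WSAux.ws_LE_ext w' T hT ih₁ ih₃
      | retract X Y h _ ih => exact w'.retract_mem_LE X Y h ih
    have hLEsub : WSAux.NegLE S ⊆ w'.LE := by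
      intro Y hY
      obtain ⟨_, ⟨l, hl⟩⟩ := WSAux.bounded_all hzero hneg hgen Y
      have hdown : WSAux.GenGE S (Y⟦min l 0⟧) := WSAux.genGE_shift_down hl (min_le_left _ _)
      have hcast : WSAux.GenGE S (Y⟦-(((- (min l 0)).toNat : ℕ) : ℤ)⟧) := by
        rw [show -((((- (min l 0)).toNat : ℕ)) : ℤ) = min l 0 by omega]
        exact hdown
      exact hGLEsub Y
        (WSAux.negLE_sub_genLE hzero hsum hneg hgen ((- (min l 0)).toNat) Y hY hcast)
    constructor
    · exact Set.Subset.antisymm hLE'sub hLEsub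
    · refine Set.Subset.antisymm ?_ (fun X hX => hGEsub X hX)
      intro X hX
      refine WSAux.genGE_of_orth (WSAux.hasWD_all hzero hneg hgen _) ?_
      intro Z hZ f
      exact w'.orthogonal X Z hX (hLEsub hZ) f
  · -- the heart is the Karoubi closure of S
    ext X
    constructor
    · rintro ⟨h1, h2⟩
      exact WSAux.heart_sub_Kar hzero hsum hneg h1 h2
    · intro hK
      exact ⟨WSAux.Kar_sub_negLE hneg hK, WSAux.Kar_sub_genGE hK⟩
end

section
/- Let C be a triangulated category carrying a weight structure w and a t-structure t with w left adjacent to t, i.e. C^{w≤0} = C^{t≤0}. Let Hw be the heart of w and Hrt the heart of t. Then the functor from Hrt to the category of additive functors Hw^{op} → Ab, sending an object X ∈ C^{t=0} to the restricted representable functor Y ↦ Hom_C(Y, X) (Y ∈ C^{w=0}), is fully faithful; moreover it is exact: for every short exact sequence 0 → A → B → D → 0 in the abelian category Hrt and every Y ∈ C^{w=0}, the induced sequence 0 → Hom_C(Y,A) → Hom_C(Y,B) → Hom_C(Y,D) → 0 of abelian groups is exact. -/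
open CategoryTheory CategoryTheory.Limits CategoryTheory.Pretriangulated ZeroObject

universe v u

variable (C : Type u) [Category.{v} C] [HasZeroObject C] [HasShift C ℤ] [Preadditive C]
  [∀ n : ℤ, (shiftFunctor C n).Additive] [Pretriangulated C]

/-- A t-structure on the triangulated category `C`. `LE` is `C^{t≤0}` and `GE`
is `C^{t≥0}`. -/
structure TStructureOn where
  /-- the class `C^{t≤0}` -/
  LE : Set C
  /-- the class `C^{t≥0}` -/
  GE : Set C
  isoClosed_LE : ∀ X Y : C, X ∈ LE → Nonempty (X ≅ Y) → Y ∈ LE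
  isoClosed_GE : ∀ X Y : C, X ∈ GE → Nonempty (X ≅ Y) → Y ∈ GE
  shift_mem_LE : ∀ X : C, X ∈ LE → X⟦(1 : ℤ)⟧ ∈ LE
  shift_mem_GE : ∀ X : C, X ∈ GE → X⟦(-1 : ℤ)⟧ ∈ GE
  orthogonal : ∀ X Y : C, X⟦(-1 : ℤ)⟧ ∈ LE → Y ∈ GE → ∀ f : X ⟶ Y, f = 0
  exists_t_decomposition : ∀ X : C, ∃ (A B : C) (f : A ⟶ X) (g : X ⟶ B)
    (h : B ⟶ A⟦(1 : ℤ)⟧), A ∈ LE ∧ B⟦(1 : ℤ)⟧ ∈ GE ∧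
    Triangle.mk f g h ∈ distTriang C

variable {C}

/-- The functor sending an object `X` of the heart of `t` to the restriction of
`Hom_C(-, X)` to the heart of `w`, viewed as an abelian-group-valued functor. -/
noncomputable def heartHomFunctor (w : WeightStructure C) (t : TStructureOn C) :
    ObjectProperty.FullSubcategory (fun X : C => X ∈ t.LE ∩ t.GE) ⥤
      ((ObjectProperty.FullSubcategory (fun X : C => X ∈ w.LE ∩ w.GE))ᵒᵖ ⥤ AddCommGrpCat.{v}) :=
  ObjectProperty.ι (fun X : C => X ∈ t.LE ∩ t.GE) ⋙ preadditiveYoneda ⋙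
    (Functor.whiskeringLeft _ _ _).obj (ObjectProperty.ι (fun X : C => X ∈ w.LE ∩ w.GE)).op


section Helpers

lemma shift_map_eq_zero_iff {X Y : C} (f : X ⟶ Y) (n : ℤ) :
    (shiftFunctor C n).map f = 0 ↔ f = 0 := by
  constructor
  · intro h
    apply (shiftFunctor C n).map_injective
    rw [h, Functor.map_zero]
  · rintro rfl
    rw [Functor.map_zero]

/-- If all maps `X ⟶ Y⟦1⟧` vanish then all maps `X⟦-1⟧ ⟶ Y` vanish. -/
lemma zero_of_shift_neg {X Y : C} (h : ∀ g : X ⟶ Y⟦(1 : ℤ)⟧, g = 0)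
    (f : X⟦(-1 : ℤ)⟧ ⟶ Y) : f = 0 := by
  rw [← shift_map_eq_zero_iff f 1]
  have hg := h ((shiftEquiv C (1 : ℤ)).counitIso.inv.app X ≫ (shiftFunctor C (1 : ℤ)).map f)
  have heq : (shiftFunctor C (1 : ℤ)).map f =
      (shiftEquiv C (1 : ℤ)).counitIso.hom.app X ≫
        ((shiftEquiv C (1 : ℤ)).counitIso.inv.app X ≫ (shiftFunctor C (1 : ℤ)).map f) := by
    exact (Iso.hom_inv_id_app_assoc (shiftEquiv C (1 : ℤ)).counitIso X _).symm
  rw [heq, hg, Limits.comp_zero]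
  rfl

/-- If all maps `X⟦1⟧ ⟶ Y` vanish then all maps `X ⟶ Y⟦-1⟧` vanish. -/
lemma zero_to_shift_neg {X Y : C} (h : ∀ g : X⟦(1 : ℤ)⟧ ⟶ Y, g = 0)
    (f : X ⟶ Y⟦(-1 : ℤ)⟧) : f = 0 := by
  rw [← shift_map_eq_zero_iff f 1]
  have hg := h ((shiftFunctor C (1 : ℤ)).map f ≫ (shiftEquiv C (1 : ℤ)).counitIso.hom.app Y)
  have heq : (shiftFunctor C (1 : ℤ)).map f =
      ((shiftFunctor C (1 : ℤ)).map f ≫ (shiftEquiv C (1 : ℤ)).counitIso.hom.app Y) ≫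
        (shiftEquiv C (1 : ℤ)).counitIso.inv.app Y := by
    exact (Category.comp_id _).symm.trans ((congrArg _ ((shiftEquiv C (1 : ℤ)).counitIso.hom_inv_id_app Y).symm).trans (Category.assoc _ _ _).symm)
  rw [heq, hg, Limits.zero_comp]
  rfl

lemma isRetractOf_of_mor₁_eq_zero (T : Triangle C) (hT : T ∈ distTriang C)
    (h1 : T.mor₁ = 0) : IsRetractOf C T.obj₂ T.obj₃ := by
  obtain ⟨r, hr⟩ := Triangle.yoneda_exact₂ T hT (𝟙 T.obj₂) (by rw [h1, Limits.zero_comp])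
  exact ⟨T.mor₂, r, hr.symm⟩

/-- `w.LE` is closed under extensions. -/
lemma WeightStructure.mem_LE_ext (w : WeightStructure C) {X E Z : C}
    (f : X ⟶ E) (g : E ⟶ Z) (h : Z ⟶ X⟦(1 : ℤ)⟧)
    (hT : Triangle.mk f g h ∈ distTriang C) (hX : X ∈ w.LE) (hZ : Z ∈ w.LE) :
    E ∈ w.LE := by
  obtain ⟨A, B, a, b, c, hA, hB, hd⟩ := w.exists_weight_decomposition E
  have hinv := inv_rot_of_distTriang _ hd
  have hm1 : (Triangle.mk a b c).invRotate.mor₁ = 0 := by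
    have hgz : (Triangle.mk a b c).invRotate.mor₁ ≫ g = 0 :=
      zero_of_shift_neg (fun g' => w.orthogonal B Z hB hZ g') _
    obtain ⟨u, hu⟩ := Triangle.coyoneda_exact₂ _ hT ((Triangle.mk a b c).invRotate.mor₁) hgz
    have hu0 : u = 0 := zero_of_shift_neg (fun g' => w.orthogonal B X hB hX g') u
    rw [hu, hu0, Limits.zero_comp]
    rfl
  exact w.retract_mem_LE E A (isRetractOf_of_mor₁_eq_zero _ hinv hm1) hA

/-- Weight-zero cover of an object of `w.LE`: a distinguished triangle
`A ⟶ W ⟶ X ⟶ A⟦1⟧` with `A ∈ w.LE` and `W` in the heart of `w`. -/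
lemma WeightStructure.exists_cover (w : WeightStructure C) {X : C} (hX : X ∈ w.LE) :
    ∃ (A W : C) (a : A ⟶ W) (p : W ⟶ X) (δ : X ⟶ A⟦(1 : ℤ)⟧),
      A ∈ w.LE ∧ W ∈ w.LE ∧ W ∈ w.GE ∧ Triangle.mk a p δ ∈ distTriang C := by
  obtain ⟨A, B, g, f, h, hA, hB, hd⟩ := w.exists_weight_decomposition (X⟦(-1 : ℤ)⟧)
  have hrot := rot_of_distTriang _ hd
  let e : (X⟦(-1 : ℤ)⟧)⟦(1 : ℤ)⟧ ≅ X := (shiftEquiv C (1 : ℤ)).counitIso.app X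
  let T' : Triangle C := Triangle.mk f (h ≫ e.hom)
    (e.inv ≫ (-(shiftFunctor C (1 : ℤ)).map g))
  have hT' : T' ∈ distTriang C := by
    refine isomorphic_distinguished _ hrot _ ?_
    exact Triangle.isoMk T' (Triangle.mk g f h).rotate (Iso.refl _) (Iso.refl _) e.symm
      (by exact (Category.comp_id _).trans (Category.id_comp _).symm)
      (by exact ((Category.assoc _ _ _).trans (congrArg _ e.hom_inv_id)).trans ((Category.comp_id _).trans (Category.id_comp _).symm))
      (by exact (congrArg _ ((shiftFunctor C (1 : ℤ)).map_id _)).trans (Category.comp_id _))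
  have hBLE : B ∈ w.LE := w.mem_LE_ext _ _ _ hT' hA hX
  exact ⟨A, B, f, h ≫ e.hom, e.inv ≫ (-(shiftFunctor C (1 : ℤ)).map g), hA, hBLE, hB, hT'⟩

lemma TStructureOn.hom_shift_one_zero (t : TStructureOn C) {A Z : C}
    (hA : A ∈ t.LE) (hZ : Z ∈ t.GE) (f : A⟦(1 : ℤ)⟧ ⟶ Z) : f = 0 :=
  t.orthogonal _ Z (t.isoClosed_LE A _ hA ⟨(shiftEquiv C (1 : ℤ)).unitIso.app A⟩) hZ f

lemma TStructureOn.hom_to_shift_neg_zero (t : TStructureOn C) {Y D : C}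
    (hY : Y ∈ t.LE) (hD : D ∈ t.GE) (f : Y ⟶ D⟦(-1 : ℤ)⟧) : f = 0 :=
  zero_to_shift_neg (fun g => t.hom_shift_one_zero hY hD g) f

/-- Maps out of a cover detect vanishing into `t.GE`-objects. -/
lemma cover_mono (t : TStructureOn C) {A W Xo Z : C} (hA : A ∈ t.LE) (hZ : Z ∈ t.GE)
    {a : A ⟶ W} {p : W ⟶ Xo} {δ : Xo ⟶ A⟦(1 : ℤ)⟧}
    (hT : Triangle.mk a p δ ∈ distTriang C)
    (α : Xo ⟶ Z) (hα : p ≫ α = 0) : α = 0 := by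
  obtain ⟨β, hβ⟩ := Triangle.yoneda_exact₃ _ hT α hα
  rw [hβ, t.hom_shift_one_zero hA hZ β]
  exact Limits.comp_zero

/-- Maps from heart-of-`w` objects lift along a cover. -/
lemma cover_surj (w : WeightStructure C) {A W Xo Y : C} (hA : A ∈ w.LE) (hY : Y ∈ w.GE)
    {a : A ⟶ W} {p : W ⟶ Xo} {δ : Xo ⟶ A⟦(1 : ℤ)⟧}
    (hT : Triangle.mk a p δ ∈ distTriang C)
    (y : Y ⟶ Xo) : ∃ z : Y ⟶ W, z ≫ p = y := by
  obtain ⟨z, hz⟩ := Triangle.coyoneda_exact₃ _ hT y (w.orthogonal Y A hY hA _)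
  exact ⟨z, hz.symm⟩

end Helpers

/-- Theorem 4.4.2(4) of Bondarko: if the weight structure `w` is
left adjacent to the t-structure `t` (`C^{w≤0} = C^{t≤0}`), then restricting
representable functors to the heart of `w` gives a fully faithful functor from
the heart of `t` into additive functors `Hw^{op} → Ab`; it is exact in the
sense that every distinguished triangle `A → B → D → A[1]` with vertices in
the heart of `t` (i.e. every short exact sequence of `Hrt`) yields a short
exact sequence `0 → Hom(Y,A) → Hom(Y,B) → Hom(Y,D) → 0` for every `Y` in the
heart of `w`. -/
theorem heartHomFunctor_fullyFaithful_exact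
    (w : WeightStructure C) (t : TStructureOn C) (adj : t.LE = w.LE) :
    (heartHomFunctor w t).Full ∧ (heartHomFunctor w t).Faithful ∧
    (∀ X : ObjectProperty.FullSubcategory (fun X : C => X ∈ t.LE ∩ t.GE),
      ((heartHomFunctor w t).obj X).Additive) ∧
    (∀ (A B D : C), A ∈ t.LE ∩ t.GE → B ∈ t.LE ∩ t.GE → D ∈ t.LE ∩ t.GE →
      ∀ (f : A ⟶ B) (g : B ⟶ D) (h : D ⟶ A⟦(1 : ℤ)⟧),
        (Triangle.mk f g h ∈ distTriang C) →
        ∀ Y : C, Y ∈ w.LE ∩ w.GE →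
          (∀ φ₁ φ₂ : Y ⟶ A, φ₁ ≫ f = φ₂ ≫ f → φ₁ = φ₂) ∧
          (∀ ψ : Y ⟶ B, ψ ≫ g = 0 → ∃ φ : Y ⟶ A, φ ≫ f = ψ) ∧
          (∀ χ : Y ⟶ D, ∃ ψ : Y ⟶ B, ψ ≫ g = χ)) := by
  
  have hLEw : ∀ {P : C}, P ∈ t.LE → P ∈ w.LE := fun h => adj ▸ h
  have hLEt : ∀ {P : C}, P ∈ w.LE → P ∈ t.LE := fun h => adj.symm ▸ h
  refine ⟨?_, ?_, ?_, ?_⟩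
  · -- Full
    constructor
    intro X Z η
    obtain ⟨A, W, a, p, δ, hALE, hWLE, hWGE, hT⟩ := w.exists_cover (hLEw X.2.1)
    obtain ⟨A', W', a', p', δ', hA'LE, hW'LE, hW'GE, hT'⟩ := w.exists_cover hALE
    let Wsub : ObjectProperty.FullSubcategory (fun X : C => X ∈ w.LE ∩ w.GE) := ⟨W, hWLE, hWGE⟩
    let W'sub : ObjectProperty.FullSubcategory (fun X : C => X ∈ w.LE ∩ w.GE) := ⟨W', hW'LE, hW'GE⟩
    let q : W ⟶ Z.obj := η.app (Opposite.op Wsub) p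
    have hnat : ∀ (Y : ObjectProperty.FullSubcategory (fun X : C => X ∈ w.LE ∩ w.GE)) (z : Y.obj ⟶ W),
        η.app (Opposite.op Y) (z ≫ p) = z ≫ q := by
      intro Y z
      have h := NatTrans.naturality_apply η (Quiver.Hom.op (show Y ⟶ Wsub from ObjectProperty.homMk z)) p
      exact h
    have haq : a ≫ q = 0 := by
      apply cover_mono t (hLEt hA'LE) Z.2.2 hT'
      have hap : a ≫ p = 0 := comp_distTriang_mor_zero₁₂ _ hT
      have h0 : (p' ≫ a) ≫ p = 0 := by
        rw [Category.assoc, hap, Limits.comp_zero]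
      have h1 := hnat W'sub (p' ≫ a)
      rw [h0] at h1
      rw [← Category.assoc, ← h1]
      exact (η.app (Opposite.op W'sub)).hom.map_zero
    obtain ⟨α, hα⟩ := Triangle.yoneda_exact₂ _ hT q haq
    refine ⟨ObjectProperty.homMk α, ?_⟩
    apply NatTrans.ext
    funext Yop
    obtain ⟨Ysub⟩ := Yop
    apply AddCommGrpCat.ext
    intro y
    obtain ⟨z, hz⟩ := cover_surj w hALE Ysub.2.2 hT y
    have h3 := hnat Ysub z
    rw [hz] at h3
    have hα' : q = p ≫ α := hα
    have h4 : (η.app (Opposite.op Ysub)) y = (y : Ysub.obj ⟶ X.obj) ≫ α := by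
      rw [h3, hα', ← hz]
      exact (Category.assoc _ _ _).symm
    exact h4.symm
  · -- Faithful
    constructor
    intro X Z α β h
    obtain ⟨A, W, a, p, δ, hALE, hWLE, hWGE, hT⟩ := w.exists_cover (hLEw X.2.1)
    let Wsub : ObjectProperty.FullSubcategory (fun X : C => X ∈ w.LE ∩ w.GE) := ⟨W, hWLE, hWGE⟩
    have h2 := congrArg (fun ν => (ν.app (Opposite.op Wsub)).hom p) h
    have h2' : p ≫ α.hom = p ≫ β.hom := h2
    have h3 : p ≫ (α.hom - β.hom) = 0 := by
      rw [Preadditive.comp_sub, h2', sub_self]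
    have h4 := cover_mono t (hLEt hALE) Z.2.2 hT _ h3
    have h5 : α.hom = β.hom := by
      rwa [sub_eq_zero] at h4
    exact ObjectProperty.hom_ext _ h5
  · -- Additive
    intro X
    exact inferInstanceAs
      ((ObjectProperty.ι (fun X : C => X ∈ w.LE ∩ w.GE)).op ⋙
        preadditiveYoneda.obj X.obj).Additive
  · -- Exactness
    intro A B D hA hB hD f g h hT Y hY
    refine ⟨?_, ?_, ?_⟩
    · intro φ₁ φ₂ hφ
      have h0 : (φ₁ - φ₂) ≫ f = 0 := by rw [Preadditive.sub_comp, hφ, sub_self]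
      obtain ⟨ξ, hξ⟩ := Triangle.coyoneda_exact₂ _ (inv_rot_of_distTriang _ hT) (φ₁ - φ₂) h0
      have hξ0 : ξ = 0 := t.hom_to_shift_neg_zero (hLEt hY.1) hD.2 ξ
      rw [hξ0, Limits.zero_comp] at hξ
      exact sub_eq_zero.mp hξ
    · intro ψ hψ
      obtain ⟨φ, hφ⟩ := Triangle.coyoneda_exact₂ _ hT ψ hψ
      exact ⟨φ, hφ.symm⟩
    · intro χ
      obtain ⟨ψ, hψ⟩ := Triangle.coyoneda_exact₃ _ hT χ (w.orthogonal Y A hY.2 (hLEw hA.1) _)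
      exact ⟨ψ, hψ.symm⟩
end

section
/- Let C be a triangulated category carrying a weight structure w and a t-structure t with w left adjacent to t (C^{w≤0} = C^{t≤0}). Fix i ∈ ℤ, objects X, Y of C, and a weight decomposition of X[i] giving a distinguished triangle w_{≥i+1}X → X → w_{≤i}X. Then Im(Hom_C(w_{≤i}X, Y) → Hom_C(X, Y)) = Im(Hom_C(X, τ_{≤i}Y) → Hom_C(X, Y)), where τ_{≤i}Y = Y^{t≤i}[-i] is the t-truncation of Y, the first map is precomposition with X → w_{≤i}X, and the second is postcomposition with τ_{≤i}Y → Y. In particular the weight filtration of the functor Hom_C(−, Y) coincides with the filtration induced by the t-truncations of Y. -/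
open CategoryTheory CategoryTheory.Limits CategoryTheory.Pretriangulated ZeroObject

universe v u

variable (C : Type u) [Category.{v} C] [HasZeroObject C] [HasShift C ℤ] [Preadditive C]
  [∀ n : ℤ, (shiftFunctor C n).Additive] [Pretriangulated C]

/-- Theorem 4.4.2(6) of Bondarko: let `w` be left adjacent to
`t` (`C^{w≤0} = C^{t≤0}`), and fix `i ∈ ℤ`, `X, Y ∈ C`. Given a weight
decomposition of `X[i]`, encoded as a distinguished triangle `Z → X → P → Z⟦1⟧`
with `Z ∈ C^{w≥i+1}` (`Z⟦i+1⟧ ∈ C^{w≥0}`) and `P = w_{≤i}X ∈ C^{w≤i}`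
(`P⟦i⟧ ∈ C^{w≤0}`), and a t-decomposition of `Y[i]`, encoded as a
distinguished triangle `A → Y → B → A⟦1⟧` with `A = τ_{≤i}Y ∈ C^{t≤i}`
(`A⟦i⟧ ∈ C^{t≤0}`) and `B ∈ C^{t≥i+1}` (`B⟦i+1⟧ ∈ C^{t≥0}`), the image of
`Hom(w_{≤i}X, Y) → Hom(X, Y)` equals the image of
`Hom(X, τ_{≤i}Y) → Hom(X, Y)`. -/
theorem weight_filtration_eq_t_filtration
    (w : WeightStructure C) (t : TStructureOn C) (adj : t.LE = w.LE)
    (i : ℤ) (X Y Z P A B : C)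
    (zg : Z ⟶ X) (p : X ⟶ P) (d : P ⟶ Z⟦(1 : ℤ)⟧)
    (hZ : Z⟦i + 1⟧ ∈ w.GE) (hP : P⟦i⟧ ∈ w.LE)
    (hwdec : Triangle.mk zg p d ∈ distTriang C)
    (a : A ⟶ Y) (b : Y ⟶ B) (e : B ⟶ A⟦(1 : ℤ)⟧)
    (hA : A⟦i⟧ ∈ t.LE) (hB : B⟦i + 1⟧ ∈ t.GE)
    (htdec : Triangle.mk a b e ∈ distTriang C) :
    {g : X ⟶ Y | ∃ φ : P ⟶ Y, g = p ≫ φ} =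
      {g : X ⟶ Y | ∃ ψ : X ⟶ A, g = ψ ≫ a} := by
  ext g
  constructor
  · rintro ⟨φ, rfl⟩
    have hφb : φ ≫ b = 0 := by
      apply (shiftFunctor C (i + 1)).map_injective
      rw [Functor.map_zero]
      apply t.orthogonal
      · exact t.isoClosed_LE _ _ (adj.symm ▸ hP)
          ⟨(shiftFunctorAdd' C (i + 1) (-1) i (by ring)).app P⟩
      · exact hB
    obtain ⟨χ, hχ⟩ := Triangle.coyoneda_exact₂ _ htdec φ hφb
    exact ⟨p ≫ χ, by rw [hχ]; exact (Category.assoc p χ a).symm⟩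
  · rintro ⟨ψ, rfl⟩
    have hzψ : zg ≫ ψ = 0 := by
      apply (shiftFunctor C (i + 1)).map_injective
      rw [Functor.map_zero]
      rw [← cancel_mono ((shiftFunctorAdd' C i 1 (i + 1) rfl).app A).hom, zero_comp]
      exact w.orthogonal _ _ hZ (adj ▸ hA) _
    obtain ⟨φ, hφ⟩ := Triangle.yoneda_exact₂ _ hwdec (ψ ≫ a)
      (by change zg ≫ ψ ≫ a = 0; rw [← Category.assoc, hzψ, zero_comp])
    exact ⟨φ, hφ⟩
end

section
/- Let C and C' be triangulated categories; let w be a weight structure and t a t-structure on C with w left adjacent to t (C^{w≤0} = C^{t≤0}), and let w' be a weight structure and t' a t-structure on C' with w' left adjacent to t' (C'^{w'≤0} = C'^{t'≤0}). Let F : C → C' be an exact (triangulated) functor and let G : C' → C be an exact functor left adjoint to F. Then G is weight-exact (G(C'^{w'≤0}) ⊆ C^{w≤0} and G(C'^{w'≥0}) ⊆ C^{w≥0}) if and only if F is t-exact (F(C^{t≤0}) ⊆ C'^{t'≤0} and F(C^{t≥0}) ⊆ C'^{t'≥0}). -/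
open CategoryTheory CategoryTheory.Limits CategoryTheory.Pretriangulated ZeroObject

universe v u v' u'

variable (C : Type u) [Category.{v} C] [HasZeroObject C] [HasShift C ℤ] [Preadditive C]
  [∀ n : ℤ, (shiftFunctor C n).Additive] [Pretriangulated C]

section Aux

variable {D : Type*} [Category D] [HasZeroObject D] [HasShift D ℤ] [Preadditive D]
  [∀ n : ℤ, (shiftFunctor D n).Additive] [Pretriangulated D]

lemma aux_retract_of_iso {X Y : D} (e : X ≅ Y) : IsRetractOf D X Y :=
  ⟨e.hom, e.inv, e.hom_inv_id⟩

lemma aux_hom_zero_of_equiv {E : Type*} [Category E] [Preadditive E]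
    {A B : D} {A' B' : E} (ez : (A ⟶ B) ≃ (A' ⟶ B'))
    (h : ∀ g : A' ⟶ B', g = 0) (f : A ⟶ B) : f = 0 := by
  calc f = ez.symm (ez f) := (ez.symm_apply_apply f).symm
  _ = ez.symm (ez (0 : A ⟶ B)) := by rw [h (ez f), h (ez 0)]
  _ = 0 := ez.symm_apply_apply 0

lemma aux_shift_eq_zero {A B : D} (f : A ⟶ B) (n : ℤ)
    (h : (shiftFunctor D n).map f = 0) : f = 0 := by
  apply (shiftFunctor D n).map_injective
  rw [h, Functor.map_zero]

/-- Characterization of `C^{w≥0}` as the orthogonal of `C^{w≤-1}`. -/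
lemma aux_mem_wGE (w : WeightStructure D) (X : D)
    (h : ∀ Y, Y ∈ w.LE → ∀ f : X ⟶ Y⟦(1 : ℤ)⟧, f = 0) : X ∈ w.GE := by
  obtain ⟨A, B, g, f, h', hA, hB, hT⟩ := w.exists_weight_decomposition (X⟦(-1 : ℤ)⟧)
  have e : X⟦(-1 : ℤ)⟧⟦(1 : ℤ)⟧ ≅ X := (shiftFunctorCompIsoId D (-1) 1 (by norm_num)).app X
  have hg : g = 0 := by
    apply aux_shift_eq_zero g 1
    have h0 : e.inv ≫ (shiftFunctor D (1 : ℤ)).map g = 0 := h A hA _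
    rw [← Category.id_comp ((shiftFunctor D (1 : ℤ)).map g), ← e.hom_inv_id,
      Category.assoc, h0, comp_zero]
  have hT2 := rot_of_distTriang _ (rot_of_distTriang _ hT)
  obtain ⟨i, hi⟩ := Triangle.coyoneda_exact₂ _ hT2
    (𝟙 ((Triangle.mk g f h').rotate.rotate.obj₂)) (by rw [Category.id_comp]; change -(shiftFunctor D (1 : ℤ)).map g = 0; rw [hg, Functor.map_zero, neg_zero])
  have hret : IsRetractOf D (X⟦(-1 : ℤ)⟧⟦(1 : ℤ)⟧) B := ⟨i, h', hi.symm⟩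
  exact w.retract_mem_GE X _ (aux_retract_of_iso e.symm) (w.retract_mem_GE _ B hret hB)

/-- Characterization of `C^{w≤0}` as the left orthogonal of `C^{w≥1}`. -/
lemma aux_mem_wLE (w : WeightStructure D) (X : D)
    (h : ∀ Z, Z ∈ w.GE → ∀ f : Z ⟶ X⟦(1 : ℤ)⟧, f = 0) : X ∈ w.LE := by
  obtain ⟨A, B, g, f, h', hA, hB, hT⟩ := w.exists_weight_decomposition X
  have hh' : h' = 0 := h B hB h'
  obtain ⟨r, hr⟩ := Triangle.yoneda_exact₂ _ (inv_rot_of_distTriang _ hT)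
    (𝟙 ((Triangle.mk g f h').invRotate.obj₂)) (by rw [Category.comp_id]; change -(shiftFunctor D (-1 : ℤ)).map h' ≫ (shiftFunctorCompIsoId D (1 : ℤ) (-1) (by norm_num)).hom.app X = 0; rw [hh']; simp)
  exact w.retract_mem_LE X A ⟨g, r, hr.symm⟩ hA

/-- In a t-structure, `Hom(X, Y⟦-1⟧) = 0` whenever `X ∈ t^{≤0}` and `Y ∈ t^{≥0}`. -/
lemma aux_tOrth_neg (t : TStructureOn D) {A B : D} (hA : A ∈ t.LE) (hB : B ∈ t.GE)
    (f : A ⟶ B⟦(-1 : ℤ)⟧) : f = 0 := by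
  have e : B⟦(-1 : ℤ)⟧⟦(1 : ℤ)⟧ ≅ B := (shiftFunctorCompIsoId D (-1) 1 (by norm_num)).app B
  have hA1 : (A⟦(1 : ℤ)⟧)⟦(-1 : ℤ)⟧ ∈ t.LE :=
    t.isoClosed_LE A _ hA ⟨((shiftFunctorCompIsoId D 1 (-1) (by norm_num)).app A).symm⟩
  have h1 : (shiftFunctor D (1 : ℤ)).map f ≫ e.hom = 0 := t.orthogonal _ _ hA1 hB _
  apply aux_shift_eq_zero f 1
  rw [← Category.comp_id ((shiftFunctor D (1 : ℤ)).map f), ← e.hom_inv_id,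
    ← Category.assoc, h1, zero_comp]

/-- Characterization of `C^{t≤0}` as the left orthogonal of `C^{t≥1}`. -/
lemma aux_mem_tLE (t : TStructureOn D) (X : D)
    (h : ∀ Y, Y ∈ t.GE → ∀ f : X ⟶ Y⟦(-1 : ℤ)⟧, f = 0) : X ∈ t.LE := by
  obtain ⟨A, B, a, b, c, hA, hB, hT⟩ := t.exists_t_decomposition X
  have eB : B ≅ (B⟦(1 : ℤ)⟧)⟦(-1 : ℤ)⟧ :=
    ((shiftFunctorCompIsoId D 1 (-1) (by norm_num)).app B).symm
  have hb : b = 0 := by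
    have h1 : b ≫ eB.hom = 0 := h (B⟦(1 : ℤ)⟧) hB _
    rw [← Category.comp_id b, ← eB.hom_inv_id, ← Category.assoc, h1, zero_comp]
  have hBGE : B ∈ t.GE := t.isoClosed_GE _ _ (t.shift_mem_GE _ hB) ⟨eB.symm⟩
  obtain ⟨k, hk⟩ := Triangle.yoneda_exact₂ _ (rot_of_distTriang _ hT)
    (𝟙 ((Triangle.mk a b c).rotate.obj₂)) (by simp [Triangle.rotate, hb]; exact (Category.comp_id _).trans rfl)
  have hA1 : (A⟦(1 : ℤ)⟧)⟦(-1 : ℤ)⟧ ∈ t.LE :=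
    t.isoClosed_LE A _ hA ⟨((shiftFunctorCompIsoId D 1 (-1) (by norm_num)).app A).symm⟩
  have hk0 : k = 0 := t.orthogonal (A⟦(1 : ℤ)⟧) B hA1 hBGE k
  have hBzero : IsZero B := by
    rw [IsZero.iff_id_eq_zero]
    have : (𝟙 B : B ⟶ B) = (Triangle.mk a b c).rotate.mor₂ ≫ k := hk
    rw [this, hk0, comp_zero]
    rfl
  have : IsIso a := (Triangle.isZero₃_iff_isIso₁ _ hT).1 hBzero
  exact t.isoClosed_LE A X hA ⟨asIso a⟩

/-- Characterization of `C^{t≥0}` as the orthogonal of `C^{t≤-1}`. -/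
lemma aux_mem_tGE (t : TStructureOn D) (X : D)
    (h : ∀ Z : D, Z⟦(-1 : ℤ)⟧ ∈ t.LE → ∀ f : Z ⟶ X, f = 0) : X ∈ t.GE := by
  obtain ⟨A, B, a, b, c, hA, hB, hT⟩ := t.exists_t_decomposition (X⟦(-1 : ℤ)⟧)
  have e : X⟦(-1 : ℤ)⟧⟦(1 : ℤ)⟧ ≅ X := (shiftFunctorCompIsoId D (-1) 1 (by norm_num)).app X
  have hA1 : (A⟦(1 : ℤ)⟧)⟦(-1 : ℤ)⟧ ∈ t.LE :=
    t.isoClosed_LE A _ hA ⟨((shiftFunctorCompIsoId D 1 (-1) (by norm_num)).app A).symm⟩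
  have ha : a = 0 := by
    apply aux_shift_eq_zero a 1
    have h1 : (shiftFunctor D (1 : ℤ)).map a ≫ e.hom = 0 := h (A⟦(1 : ℤ)⟧) hA1 _
    rw [← Category.comp_id ((shiftFunctor D (1 : ℤ)).map a), ← e.hom_inv_id,
      ← Category.assoc, h1, zero_comp]
  obtain ⟨g', hg'⟩ := Triangle.coyoneda_exact₂ _ (inv_rot_of_distTriang _ hT)
    (𝟙 ((Triangle.mk a b c).invRotate.obj₂)) (by simp [Triangle.invRotate, ha]; exact (Category.id_comp _).trans rfl)
  have eB2 : B⟦(-1 : ℤ)⟧⟦(1 : ℤ)⟧ ≅ B := (shiftFunctorCompIsoId D (-1) 1 (by norm_num)).app B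
  have hBGE : B ∈ t.GE := t.isoClosed_GE _ _ (t.shift_mem_GE _ hB)
    ⟨(shiftFunctorCompIsoId D 1 (-1) (by norm_num)).app B⟩
  have hall : ∀ p : A ⟶ B⟦(-1 : ℤ)⟧, p = 0 := by
    intro p
    apply aux_shift_eq_zero p 1
    have h1 : (shiftFunctor D (1 : ℤ)).map p ≫ eB2.hom = 0 :=
      t.orthogonal (A⟦(1 : ℤ)⟧) B hA1 hBGE _
    rw [← Category.comp_id ((shiftFunctor D (1 : ℤ)).map p), ← eB2.hom_inv_id,
      ← Category.assoc, h1, zero_comp]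
  have hg'0 : g' = 0 := hall g'
  have hAzero : IsZero A := by
    rw [IsZero.iff_id_eq_zero]
    have : (𝟙 A : A ⟶ A) = g' ≫ (Triangle.mk a b c).invRotate.mor₁ := hg'
    rw [this, hg'0, zero_comp]
    rfl
  have : IsIso b := (Triangle.isZero₁_iff_isIso₂ _ hT).1 hAzero
  refine t.isoClosed_GE (B⟦(1 : ℤ)⟧) X hB
    ⟨(((shiftFunctor D (1 : ℤ)).mapIso (asIso b)).symm ≪≫ e :)⟩

end Aux

/-- Proposition 4.4.5(3) of Bondarko: given left adjacent pairs
`(w, t)` on `C` and `(w', t')` on `C'`, an exact functor `F : C ⥤ C'` with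
exact left adjoint `G : C' ⥤ C`, the functor `G` is weight-exact if and only
if `F` is t-exact. -/
theorem weightExact_left_adjoint_iff_tExact
    {C' : Type u'} [Category.{v'} C'] [HasZeroObject C'] [HasShift C' ℤ]
    [Preadditive C'] [∀ n : ℤ, (shiftFunctor C' n).Additive] [Pretriangulated C']
    (w : WeightStructure C) (t : TStructureOn C) (adjC : t.LE = w.LE)
    (w' : WeightStructure C') (t' : TStructureOn C') (adjC' : t'.LE = w'.LE)
    (F : C ⥤ C') [F.CommShift ℤ] [F.IsTriangulated]
    (G : C' ⥤ C) [G.CommShift ℤ] [G.IsTriangulated]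
    (adj : G ⊣ F) :
    ((∀ X : C', X ∈ w'.LE → G.obj X ∈ w.LE) ∧
     (∀ X : C', X ∈ w'.GE → G.obj X ∈ w.GE)) ↔
    ((∀ X : C, X ∈ t.LE → F.obj X ∈ t'.LE) ∧
     (∀ X : C, X ∈ t.GE → F.obj X ∈ t'.GE)) := by
  constructor
  · rintro ⟨hGle, hGge⟩
    constructor
    · -- F preserves t≤0
      intro X hX
      rw [adjC']
      apply aux_mem_wLE w' (F.obj X)
      intro Z hZ f
      refine aux_hom_zero_of_equiv
        ((Iso.homCongr (Iso.refl Z) ((F.commShiftIso (1 : ℤ)).app X).symm).trans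
          (adj.homEquiv Z (X⟦(1 : ℤ)⟧)).symm)
        (fun g => w.orthogonal _ _ (hGge Z hZ) (adjC ▸ hX) g) f
    · -- F preserves t≥0
      intro X hX
      apply aux_mem_tGE t' (F.obj X)
      intro Z hZ f
      have h1 : G.obj (Z⟦(-1 : ℤ)⟧) ∈ t.LE := by
        rw [adjC]
        exact hGle _ (by rw [← adjC']; exact hZ)
      have hmem : (G.obj Z)⟦(-1 : ℤ)⟧ ∈ t.LE :=
        t.isoClosed_LE _ _ h1 ⟨(G.commShiftIso (-1 : ℤ)).app Z⟩
      exact aux_hom_zero_of_equiv ((adj.homEquiv Z X).symm)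
        (fun g => t.orthogonal _ _ hmem hX g) f
  · rintro ⟨hFle, hFge⟩
    constructor
    · -- G preserves w≤0
      intro Z hZ
      rw [← adjC]
      apply aux_mem_tLE t (G.obj Z)
      intro Y hY f
      have hFY : F.obj Y ∈ t'.GE := hFge Y hY
      have hZ' : Z ∈ t'.LE := by rw [adjC']; exact hZ
      exact aux_hom_zero_of_equiv
        ((adj.homEquiv Z (Y⟦(-1 : ℤ)⟧)).trans
          (Iso.homCongr (Iso.refl Z) ((F.commShiftIso (-1 : ℤ)).app Y)))
        (fun g => aux_tOrth_neg t' hZ' hFY g) f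
    · -- G preserves w≥0
      intro Z hZ
      apply aux_mem_wGE w (G.obj Z)
      intro Y hY f
      have hFY : F.obj Y ∈ w'.LE := by
        rw [← adjC']
        exact hFle Y (by rw [adjC]; exact hY)
      exact aux_hom_zero_of_equiv
        ((adj.homEquiv Z (Y⟦(1 : ℤ)⟧)).trans
          (Iso.homCongr (Iso.refl Z) ((F.commShiftIso (1 : ℤ)).app Y)))
        (fun g => w'.orthogonal Z (F.obj Y) hZ hFY g) f
end
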